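/- arXiv:0909.0602 — 7 statements merged into one kernel-verified Lean document; each statement's English description precedes it below -/
import Mathlib

section
/- Let (F₁, F₂) and (G₁, G₂) be the CHFIS pairs, with the same parameters α_{n,m}, β_{n,m}, γ_{n,m}, for generalized interpolation data Δ = {(x_i, y_j, z_{i,j}, t_{i,j})} and Δ* = {(x*_i, y*_j, z_{i,j}, t_{i,j})} respectively, where the knots satisfy the invariance-of-ratio condition and S* ⊆ S. Suppose M̄ ≥ 0 and δ ∈ (0,1] are such that |F₂(X) − F₂(X̄)| ≤ M̄ · d_M(X,X̄)^δ for all X, X̄ ∈ S. Then sup_{(x,y) ∈ S*} |F₂(x,y) − G₂(x,y)| ≤ M̄ · ((1+γ)/(1−γ)) · max{ (|x_n − x*_n| + |y_m − y*_m|)^δ : 0 ≤ n ≤ N, 0 ≤ m ≤ M }, where γ = max_{n,m}|γ_{n,m}|. -/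
open Real Set

noncomputable section

/-- `z_eva` (resp. `t_eva`) from the paper: `z N M - z N 0 - z 0 M + z 0 0`. -/
def eva (N M : ℕ) (z : ℕ → ℕ → ℝ) : ℝ := z N M - z N 0 - z 0 M + z 0 0

/-- The coefficient `g_{n,m}` determined by the join-up conditions. -/
def gCoef (N M : ℕ) (x y : ℕ → ℝ) (z t : ℕ → ℕ → ℝ) (a b : ℕ → ℕ → ℝ) (n m : ℕ) : ℝ :=
  (z (n-1) (m-1) - z (n-1) m - z n (m-1) + z n m
    - a n m * eva N M z - b n m * eva N M t) / ((x 0 - x N) * (y 0 - y M))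

/-- The coefficient `e_{n,m}`. -/
def eCoef (N M : ℕ) (x y : ℕ → ℝ) (z t : ℕ → ℕ → ℝ) (a b : ℕ → ℕ → ℝ) (n m : ℕ) : ℝ :=
  (z (n-1) (m-1) - z n (m-1) - a n m * (z 0 0 - z N 0) - b n m * (t 0 0 - t N 0)
    - gCoef N M x y z t a b n m * (x 0 - x N) * y 0) / (x 0 - x N)

/-- The coefficient `f_{n,m}`. -/
def fCoef (N M : ℕ) (x y : ℕ → ℝ) (z t : ℕ → ℕ → ℝ) (a b : ℕ → ℕ → ℝ) (n m : ℕ) : ℝ :=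
  (z (n-1) (m-1) - z (n-1) m - a n m * (z 0 0 - z 0 M) - b n m * (t 0 0 - t 0 M)
    - gCoef N M x y z t a b n m * (y 0 - y M) * x 0) / (y 0 - y M)

/-- The coefficient `k_{n,m}`. -/
def kCoef (N M : ℕ) (x y : ℕ → ℝ) (z t : ℕ → ℕ → ℝ) (a b : ℕ → ℕ → ℝ) (n m : ℕ) : ℝ :=
  z n m - eCoef N M x y z t a b n m * x N - fCoef N M x y z t a b n m * y M
    - a n m * z N M - b n m * t N M - gCoef N M x y z t a b n m * x N * y M

/-- `p_{n,m}(X,Y) = e_{n,m} X + f_{n,m} Y + g_{n,m} X Y + k_{n,m}`. -/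
def pMap (N M : ℕ) (x y : ℕ → ℝ) (z t : ℕ → ℕ → ℝ) (a b : ℕ → ℕ → ℝ) (n m : ℕ)
    (X Y : ℝ) : ℝ :=
  eCoef N M x y z t a b n m * X + fCoef N M x y z t a b n m * Y
    + gCoef N M x y z t a b n m * X * Y + kCoef N M x y z t a b n m

/-- `q_{n,m}(X,Y) = ẽ_{n,m} X + f̃_{n,m} Y + g̃_{n,m} X Y + k̃_{n,m}`; it is `p` built from the
data `t` with parameters `γ` and `0`. -/
def qMap (N M : ℕ) (x y : ℕ → ℝ) (t : ℕ → ℕ → ℝ) (c : ℕ → ℕ → ℝ) (n m : ℕ) (X Y : ℝ) : ℝ :=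
  pMap N M x y t t c (fun _ _ => 0) n m X Y

/-- `φ_n` (resp. `ψ_m`): the affine map of `[x₀, x_N]` onto `[x_{n-1}, x_n]`. -/
def phiMap (N : ℕ) (x : ℕ → ℝ) (n : ℕ) (X : ℝ) : ℝ :=
  x (n-1) + (x n - x (n-1)) * (X - x 0) / (x N - x 0)

/-- Validity of generalized interpolation data: `N, M ≥ 1`, strictly increasing knots,
`|α_{n,m}| < 1` and `|β_{n,m}| + |γ_{n,m}| < 1`. -/
structure DataOK (N M : ℕ) (x y : ℕ → ℝ) (a b c : ℕ → ℕ → ℝ) : Prop where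
  hN : 1 ≤ N
  hM : 1 ≤ M
  hx : ∀ i < N, x i < x (i+1)
  hy : ∀ j < M, y j < y (j+1)
  ha : ∀ n m, 1 ≤ n → n ≤ N → 1 ≤ m → m ≤ M → |a n m| < 1
  hbc : ∀ n m, 1 ≤ n → n ≤ N → 1 ≤ m → m ≤ M → |b n m| + |c n m| < 1

/-- `(F₁, F₂)` is the CHFIS pair for the generalized interpolation data. -/
def IsCHFIS (N M : ℕ) (x y : ℕ → ℝ) (z t : ℕ → ℕ → ℝ) (a b c : ℕ → ℕ → ℝ)
    (F₁ F₂ : ℝ → ℝ → ℝ) : Prop :=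
  ContinuousOn (fun P : ℝ × ℝ => F₁ P.1 P.2) (Icc (x 0) (x N) ×ˢ Icc (y 0) (y M)) ∧
  ContinuousOn (fun P : ℝ × ℝ => F₂ P.1 P.2) (Icc (x 0) (x N) ×ˢ Icc (y 0) (y M)) ∧
  (∀ i ≤ N, ∀ j ≤ M, F₁ (x i) (y j) = z i j ∧ F₂ (x i) (y j) = t i j) ∧
  ∀ n m, 1 ≤ n → n ≤ N → 1 ≤ m → m ≤ M →
    ∀ X ∈ Icc (x 0) (x N), ∀ Y ∈ Icc (y 0) (y M),
      F₁ (phiMap N x n X) (phiMap M y m Y)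
        = a n m * F₁ X Y + b n m * F₂ X Y + pMap N M x y z t a b n m X Y ∧
      F₂ (phiMap N x n X) (phiMap M y m Y)
        = c n m * F₂ X Y + qMap N M x y t c n m X Y

/-- The invariance-of-ratio condition between the knots `x, y` and the knots `xs, ys`. -/
def RatioInv (N M : ℕ) (x y xs ys : ℕ → ℝ) : Prop :=
  (∀ n, 1 ≤ n → n ≤ N → (x 0 - x N) / (xs 0 - xs N) = (x (n-1) - x n) / (xs (n-1) - xs n)) ∧
  (∀ m, 1 ≤ m → m ≤ M → (y 0 - y M) / (ys 0 - ys M) = (y (m-1) - y m) / (ys (m-1) - ys m))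

/-- `T : [x₀, x_N] → [xs₀, xs_N]` is the cell-wise affine transfer map, sending
`[x_{n-1}, x_n]` affinely onto `[xs_{n-1}, xs_n]` (one coordinate of `R` resp. `K`). -/
def IsTransfer (N : ℕ) (x xs : ℕ → ℝ) (T : ℝ → ℝ) : Prop :=
  ∀ n, 1 ≤ n → n ≤ N → ∀ X ∈ Icc (x (n-1)) (x n),
    T X = xs (n-1) + (xs n - xs (n-1)) * (X - x (n-1)) / (x n - x (n-1))

/-- `max { |a n m| : 1 ≤ n ≤ N, 1 ≤ m ≤ M }` (as an `sSup`). -/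
def supParam (N M : ℕ) (a : ℕ → ℕ → ℝ) : ℝ :=
  sSup {v : ℝ | ∃ n m, 1 ≤ n ∧ n ≤ N ∧ 1 ≤ m ∧ m ≤ M ∧ v = |a n m|}

/-- `max { (|x_n - xs_n| + |y_m - ys_m|)^δ : 0 ≤ n ≤ N, 0 ≤ m ≤ M }` (as an `sSup`). -/
def supKnotDiff (N M : ℕ) (x xs y ys : ℕ → ℝ) (d : ℝ) : ℝ :=
  sSup {v : ℝ | ∃ n m, n ≤ N ∧ m ≤ M ∧ v = (|x n - xs n| + |y m - ys m|) ^ d}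

/-- `max { |z_{n,m} - zs_{n,m}| : 0 ≤ n ≤ N, 0 ≤ m ≤ M }` (as an `sSup`). -/
def supValDiff (N M : ℕ) (z zs : ℕ → ℕ → ℝ) : ℝ :=
  sSup {v : ℝ | ∃ n m, n ≤ N ∧ m ≤ M ∧ v = |z n m - zs n m|}

/-- `max { |z_{i,j} - z_{k,l}| : 0 ≤ i,j,k,l ≤ N }` (as an `sSup`). -/
def supPairDiff (N : ℕ) (z : ℕ → ℕ → ℝ) : ℝ :=
  sSup {v : ℝ | ∃ i j k l, i ≤ N ∧ j ≤ N ∧ k ≤ N ∧ l ≤ N ∧ v = |z i j - z k l|}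

lemma my_mono {N : ℕ} {x : ℕ → ℝ} (hx : ∀ i < N, x i < x (i+1)) :
    ∀ i j, i < j → j ≤ N → x i < x j := by
  intro i j hij hjN
  induction j with
  | zero => omega
  | succ k ih =>
    rcases Nat.lt_succ_iff_lt_or_eq.mp hij with h | h
    · exact (ih h (by omega)).trans (hx k (by omega))
    · subst h; exact hx i (by omega)

lemma my_cell : ∀ (N : ℕ), 1 ≤ N → ∀ (x : ℕ → ℝ) (X : ℝ), x 0 ≤ X → X ≤ x N →
    ∃ n, 1 ≤ n ∧ n ≤ N ∧ x (n-1) ≤ X ∧ X ≤ x n := by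
  intro N
  induction N with
  | zero => omega
  | succ k ih =>
    intro _ x X h0 hN
    by_cases hk : 1 ≤ k
    · by_cases hX : X ≤ x k
      · obtain ⟨n, h1, h2, h3, h4⟩ := ih hk x X h0 hX
        exact ⟨n, h1, by omega, h3, h4⟩
      · exact ⟨k+1, by omega, le_rfl, by simpa using le_of_not_ge hX, hN⟩
    · have : k = 0 := by omega
      subst this
      exact ⟨1, le_rfl, le_rfl, by simpa using h0, hN⟩

lemma q_canon (N M : ℕ) (x y : ℕ → ℝ) (t : ℕ → ℕ → ℝ) (c : ℕ → ℕ → ℝ) (n m : ℕ)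
    (hx : x 0 ≠ x N) (hy : y 0 ≠ y M) (X Y : ℝ) :
    qMap N M x y t c n m X Y * ((x N - x 0) * (y M - y 0)) =
      (x N - X) * (y M - Y) * (t (n-1) (m-1) - c n m * t 0 0)
      + (X - x 0) * (y M - Y) * (t n (m-1) - c n m * t N 0)
      + (x N - X) * (Y - y 0) * (t (n-1) m - c n m * t 0 M)
      + (X - x 0) * (Y - y 0) * (t n m - c n m * t N M) := by
  have hx' : x 0 - x N ≠ 0 := sub_ne_zero.mpr hx
  have hy' : y 0 - y M ≠ 0 := sub_ne_zero.mpr hy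
  simp only [qMap, pMap, kCoef, eCoef, fCoef, gCoef, eva, zero_mul, mul_zero, sub_zero]
  field_simp
  ring

lemma q_transfer (N M : ℕ) (x y xs ys : ℕ → ℝ) (t : ℕ → ℕ → ℝ) (c : ℕ → ℕ → ℝ) (n m : ℕ)
    {r s : ℝ} (hx : x 0 ≠ x N) (hy : y 0 ≠ y M) (hxs : xs 0 ≠ xs N) (hys : ys 0 ≠ ys M)
    (hr : x N - x 0 = r * (xs N - xs 0)) (hs : y M - y 0 = s * (ys M - ys 0))
    (X Y : ℝ) :
    qMap N M x y t c n m (x 0 + r * (X - xs 0)) (y 0 + s * (Y - ys 0))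
      = qMap N M xs ys t c n m X Y := by
  have hxne : x N - x 0 ≠ 0 := sub_ne_zero.mpr (Ne.symm hx)
  have hyne : y M - y 0 ≠ 0 := sub_ne_zero.mpr (Ne.symm hy)
  have h1 := q_canon N M x y t c n m hx hy (x 0 + r * (X - xs 0)) (y 0 + s * (Y - ys 0))
  have h2 := q_canon N M xs ys t c n m hxs hys X Y
  apply mul_right_cancel₀ (mul_ne_zero hxne hyne)
  rw [h1]
  have hxN : x N = x 0 + r * (xs N - xs 0) := by linarith
  have hyM : y M = y 0 + s * (ys M - ys 0) := by linarith
  rw [hxN, hyM]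
  linear_combination (-(r * s)) * h2

lemma phi_transfer {N n : ℕ} {x xs : ℕ → ℝ} {r : ℝ} (hr0 : r ≠ 0)
    (hxs : xs N - xs 0 ≠ 0)
    (e1 : x (n-1) - x 0 = r * (xs (n-1) - xs 0))
    (e2 : x n - x 0 = r * (xs n - xs 0))
    (eN : x N - x 0 = r * (xs N - xs 0)) (X : ℝ) :
    x 0 + r * (phiMap N xs n X - xs 0) = phiMap N x n (x 0 + r * (X - xs 0)) := by
  simp only [phiMap]
  rw [show x N = x 0 + r * (xs N - xs 0) by linarith,
      show x n = x 0 + r * (xs n - xs 0) by linarith,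
      show x (n-1) = x 0 + r * (xs (n-1) - xs 0) by linarith]
  have h2 : x 0 + r * (xs N - xs 0) - x 0 = r * (xs N - xs 0) := by ring
  rw [h2]
  field_simp
  ring

lemma phi_surj {N n : ℕ} {xs : ℕ → ℝ} (hd : xs n - xs (n-1) ≠ 0) (hDD : xs N - xs 0 ≠ 0)
    (P : ℝ) :
    phiMap N xs n (xs 0 + (xs N - xs 0) * (P - xs (n-1)) / (xs n - xs (n-1))) = P := by
  simp only [phiMap]
  field_simp
  ring


set_option maxHeartbeats 2000000 in
/-- stability of the self-affine component `F₂` with respect to perturbation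
of the independent variables (knots). -/
theorem chfis_stability_indep_F2 (N M : ℕ) (x y xs ys : ℕ → ℝ) (z t : ℕ → ℕ → ℝ)
    (a b c : ℕ → ℕ → ℝ)
    (hD : DataOK N M x y a b c) (hDs : DataOK N M xs ys a b c)
    (hratio : RatioInv N M x y xs ys)
    (hsub : Icc (xs 0) (xs N) ×ˢ Icc (ys 0) (ys M) ⊆ Icc (x 0) (x N) ×ˢ Icc (y 0) (y M))
    (F₁ F₂ G₁ G₂ : ℝ → ℝ → ℝ)
    (hF : IsCHFIS N M x y z t a b c F₁ F₂)
    (hG : IsCHFIS N M xs ys z t a b c G₁ G₂)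
    (Mb δ : ℝ) (hMb : 0 ≤ Mb) (hδ : δ ∈ Set.Ioc (0:ℝ) 1)
    (hH2 : ∀ X ∈ Icc (x 0) (x N), ∀ Y ∈ Icc (y 0) (y M),
      ∀ X' ∈ Icc (x 0) (x N), ∀ Y' ∈ Icc (y 0) (y M),
        |F₂ X Y - F₂ X' Y'| ≤ Mb * (|X - X'| + |Y - Y'|) ^ δ) :
    ∀ X ∈ Icc (xs 0) (xs N), ∀ Y ∈ Icc (ys 0) (ys M),
      |F₂ X Y - G₂ X Y| ≤
        Mb * ((1 + supParam N M c) / (1 - supParam N M c))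
          * supKnotDiff N M x xs y ys δ := by
  obtain ⟨hδ0, hδ1⟩ := hδ
  have hx0N : x 0 < x N := my_mono hD.hx 0 N hD.hN le_rfl
  have hy0M : y 0 < y M := my_mono hD.hy 0 M hD.hM le_rfl
  have hxs0N : xs 0 < xs N := my_mono hDs.hx 0 N hD.hN le_rfl
  have hys0M : ys 0 < ys M := my_mono hDs.hy 0 M hD.hM le_rfl
  have hxne : x 0 ≠ x N := hx0N.ne
  have hyne : y 0 ≠ y M := hy0M.ne
  have hxsne : xs 0 ≠ xs N := hxs0N.ne
  have hysne : ys 0 ≠ ys M := hys0M.ne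
  have hxd : xs N - xs 0 ≠ 0 := sub_ne_zero.mpr hxs0N.ne'
  have hyd : ys M - ys 0 ≠ 0 := sub_ne_zero.mpr hys0M.ne'
  set r : ℝ := (x N - x 0) / (xs N - xs 0) with hrdef
  set s : ℝ := (y M - y 0) / (ys M - ys 0) with hsdef
  have hr0 : 0 < r := div_pos (by linarith) (by linarith)
  have hs0 : 0 < s := div_pos (by linarith) (by linarith)
  have hxstep : ∀ nn, 1 ≤ nn → nn ≤ N → x nn - x (nn-1) = r * (xs nn - xs (nn-1)) := by
    intro nn h1 h2
    have hlt : xs (nn-1) < xs nn := my_mono hDs.hx (nn-1) nn (by omega) h2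
    have h := hratio.1 nn h1 h2
    have hcross := (div_eq_div_iff (sub_ne_zero.mpr hxs0N.ne) (sub_ne_zero.mpr hlt.ne)).mp h
    rw [hrdef, div_mul_eq_mul_div, eq_div_iff hxd]
    linear_combination -hcross
  have hystep : ∀ mm, 1 ≤ mm → mm ≤ M → y mm - y (mm-1) = s * (ys mm - ys (mm-1)) := by
    intro mm h1 h2
    have hlt : ys (mm-1) < ys mm := my_mono hDs.hy (mm-1) mm (by omega) h2
    have h := hratio.2 mm h1 h2
    have hcross := (div_eq_div_iff (sub_ne_zero.mpr hys0M.ne) (sub_ne_zero.mpr hlt.ne)).mp h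
    rw [hsdef, div_mul_eq_mul_div, eq_div_iff hyd]
    linear_combination -hcross
  have hxk : ∀ k, k ≤ N → x k - x 0 = r * (xs k - xs 0) := by
    intro k hk
    induction k with
    | zero => simp
    | succ j ih =>
      have hst := hxstep (j+1) (by omega) hk
      have hj := ih (by omega)
      have he : j + 1 - 1 = j := by omega
      rw [he] at hst
      linear_combination hst + hj
  have hyk : ∀ k, k ≤ M → y k - y 0 = s * (ys k - ys 0) := by
    intro k hk
    induction k with
    | zero => simp
    | succ j ih =>
      have hst := hystep (j+1) (by omega) hk
      have hj := ih (by omega)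
      have he : j + 1 - 1 = j := by omega
      rw [he] at hst
      linear_combination hst + hj
  have eN := hxk N le_rfl
  have eM := hyk M le_rfl
  set T1 : ℝ → ℝ := fun X => x 0 + r * (X - xs 0) with hT1
  set T2 : ℝ → ℝ := fun Y => y 0 + s * (Y - ys 0) with hT2
  have hT1mem : ∀ X, xs 0 ≤ X → X ≤ xs N → x 0 ≤ T1 X ∧ T1 X ≤ x N := by
    intro X h1 h2
    constructor
    · simp only [hT1]
      nlinarith [mul_nonneg hr0.le (sub_nonneg.mpr h1)]
    · simp only [hT1]
      nlinarith [mul_nonneg hr0.le (sub_nonneg.mpr h2)]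
  have hT2mem : ∀ Y, ys 0 ≤ Y → Y ≤ ys M → y 0 ≤ T2 Y ∧ T2 Y ≤ y M := by
    intro Y h1 h2
    constructor
    · simp only [hT2]
      nlinarith [mul_nonneg hs0.le (sub_nonneg.mpr h1)]
    · simp only [hT2]
      nlinarith [mul_nonneg hs0.le (sub_nonneg.mpr h2)]
  have hcommx : ∀ nn, 1 ≤ nn → nn ≤ N → ∀ X, T1 (phiMap N xs nn X) = phiMap N x nn (T1 X) := by
    intro nn h1 h2 X
    simp only [hT1]
    exact phi_transfer hr0.ne' hxd (hxk (nn-1) (by omega)) (hxk nn h2) eN X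
  have hcommy : ∀ mm, 1 ≤ mm → mm ≤ M → ∀ Y, T2 (phiMap M ys mm Y) = phiMap M y mm (T2 Y) := by
    intro mm h1 h2 Y
    simp only [hT2]
    exact phi_transfer hs0.ne' hyd (hyk (mm-1) (by omega)) (hyk mm h2) eM Y
  have hq : ∀ nn mm (X Y : ℝ), qMap N M x y t c nn mm (T1 X) (T2 Y)
      = qMap N M xs ys t c nn mm X Y := by
    intro nn mm X Y
    simp only [hT1, hT2]
    exact q_transfer N M x y xs ys t c nn mm hxne hyne hxsne hysne eN eM X Y
  -- the parameter γ
  set γ := supParam N M c with hγdef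
  have hsetfin : {v : ℝ | ∃ n m, 1 ≤ n ∧ n ≤ N ∧ 1 ≤ m ∧ m ≤ M ∧ v = |c n m|}.Finite := by
    apply Set.Finite.subset (((Set.finite_Iic N).prod (Set.finite_Iic M)).image
      (fun p : ℕ × ℕ => |c p.1 p.2|))
    rintro v ⟨n, m, -, h2, -, h4, rfl⟩
    exact ⟨(n, m), ⟨h2, h4⟩, rfl⟩
  have hsetne : {v : ℝ | ∃ n m, 1 ≤ n ∧ n ≤ N ∧ 1 ≤ m ∧ m ≤ M ∧ v = |c n m|}.Nonempty :=
    ⟨|c 1 1|, 1, 1, le_rfl, hD.hN, le_rfl, hD.hM, rfl⟩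
  have hγmem : γ ∈ {v : ℝ | ∃ n m, 1 ≤ n ∧ n ≤ N ∧ 1 ≤ m ∧ m ≤ M ∧ v = |c n m|} := by
    rw [hγdef, supParam]
    exact hsetne.csSup_mem hsetfin
  obtain ⟨n₀, m₀, hn₀1, hn₀N, hm₀1, hm₀M, hγeq⟩ := hγmem
  have hγ0 : 0 ≤ γ := by rw [hγeq]; exact abs_nonneg _
  have hγ1 : γ < 1 := by
    rw [hγeq]
    calc |c n₀ m₀| ≤ |b n₀ m₀| + |c n₀ m₀| := le_add_of_nonneg_left (abs_nonneg _)
      _ < 1 := hD.hbc n₀ m₀ hn₀1 hn₀N hm₀1 hm₀M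
  have hcle : ∀ nn mm, 1 ≤ nn → nn ≤ N → 1 ≤ mm → mm ≤ M → |c nn mm| ≤ γ := by
    intro nn mm h1 h2 h3 h4
    rw [hγdef, supParam]
    exact le_csSup hsetfin.bddAbove ⟨nn, mm, h1, h2, h3, h4, rfl⟩
  -- the knot-difference sup K
  set K := supKnotDiff N M x xs y ys δ with hKdef
  have hKsetfin : {v : ℝ | ∃ n m, n ≤ N ∧ m ≤ M ∧ v = (|x n - xs n| + |y m - ys m|) ^ δ}.Finite := by
    apply Set.Finite.subset (((Set.finite_Iic N).prod (Set.finite_Iic M)).image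
      (fun p : ℕ × ℕ => (|x p.1 - xs p.1| + |y p.2 - ys p.2|) ^ δ))
    rintro v ⟨n, m, h2, h4, rfl⟩
    exact ⟨(n, m), ⟨h2, h4⟩, rfl⟩
  have hKle : ∀ p q, p ≤ N → q ≤ M → (|x p - xs p| + |y q - ys q|) ^ δ ≤ K := by
    intro p q hp hq
    rw [hKdef, supKnotDiff]
    exact le_csSup hKsetfin.bddAbove ⟨p, q, hp, hq, rfl⟩
  have hK0 : 0 ≤ K := le_trans (by positivity) (hKle 0 0 (Nat.zero_le _) (Nat.zero_le _))
  -- the fixed point argument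
  set SS : Set (ℝ × ℝ) := Icc (xs 0) (xs N) ×ˢ Icc (ys 0) (ys M) with hSSdef
  have hSSc : IsCompact SS := isCompact_Icc.prod isCompact_Icc
  have hcorner : (xs 0, ys 0) ∈ SS :=
    Set.mem_prod.mpr ⟨Set.mem_Icc.mpr ⟨le_rfl, hxs0N.le⟩, Set.mem_Icc.mpr ⟨le_rfl, hys0M.le⟩⟩
  have hSSne : SS.Nonempty := ⟨(xs 0, ys 0), hcorner⟩
  have hmaps : MapsTo (fun P : ℝ × ℝ => (T1 P.1, T2 P.2)) SS
      (Icc (x 0) (x N) ×ˢ Icc (y 0) (y M)) := by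
    rintro ⟨X, Y⟩ hP
    obtain ⟨hX, hY⟩ := Set.mem_prod.mp hP
    obtain ⟨hX1, hX2⟩ := Set.mem_Icc.mp hX
    obtain ⟨hY1, hY2⟩ := Set.mem_Icc.mp hY
    exact Set.mem_prod.mpr ⟨Set.mem_Icc.mpr ⟨(hT1mem X hX1 hX2).1, (hT1mem X hX1 hX2).2⟩,
      Set.mem_Icc.mpr ⟨(hT2mem Y hY1 hY2).1, (hT2mem Y hY1 hY2).2⟩⟩
  set u : ℝ × ℝ → ℝ := fun P => F₂ (T1 P.1) (T2 P.2) - G₂ P.1 P.2 with hudef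
  have hucont : ContinuousOn u SS := by
    apply ContinuousOn.sub
    · have hgc : Continuous (fun P : ℝ × ℝ => (T1 P.1, T2 P.2)) := by
        rw [hT1, hT2]; fun_prop
      exact hF.2.1.comp hgc.continuousOn hmaps
    · exact hG.2.1
  have hbdd : BddAbove ((fun P => |u P|) '' SS) := hSSc.bddAbove_image hucont.abs
  set D := sSup ((fun P => |u P|) '' SS) with hDdef
  have hub : ∀ P ∈ SS, |u P| ≤ D := fun P hP => le_csSup hbdd ⟨P, hP, rfl⟩
  have hD0 : 0 ≤ D := le_trans (abs_nonneg _) (hub _ hcorner)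
  have hkey : ∀ P ∈ SS, |u P| ≤ γ * D := by
    rintro ⟨Px, Py⟩ hP
    obtain ⟨hPx, hPy⟩ := Set.mem_prod.mp hP
    obtain ⟨hPx1, hPx2⟩ := Set.mem_Icc.mp hPx
    obtain ⟨hPy1, hPy2⟩ := Set.mem_Icc.mp hPy
    obtain ⟨nn, hn1, hn2, hc1, hc2⟩ := my_cell N hD.hN xs Px hPx1 hPx2
    obtain ⟨mm, hm1, hm2, hd1, hd2⟩ := my_cell M hD.hM ys Py hPy1 hPy2
    have hxlt : xs (nn-1) < xs nn := my_mono hDs.hx (nn-1) nn (by omega) hn2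
    have hylt : ys (mm-1) < ys mm := my_mono hDs.hy (mm-1) mm (by omega) hm2
    set W : ℝ := xs 0 + (xs N - xs 0) * (Px - xs (nn-1)) / (xs nn - xs (nn-1)) with hWdef
    set V : ℝ := ys 0 + (ys M - ys 0) * (Py - ys (mm-1)) / (ys mm - ys (mm-1)) with hVdef
    have hphiW : phiMap N xs nn W = Px := by
      rw [hWdef]; exact phi_surj (sub_ne_zero.mpr hxlt.ne') hxd Px
    have hphiV : phiMap M ys mm V = Py := by
      rw [hVdef]; exact phi_surj (sub_ne_zero.mpr hylt.ne') hyd Py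
    have hW1 : xs 0 ≤ W := by
      rw [hWdef]
      have : 0 ≤ (xs N - xs 0) * (Px - xs (nn-1)) / (xs nn - xs (nn-1)) :=
        div_nonneg (mul_nonneg (by linarith) (by linarith)) (by linarith)
      linarith
    have hW2 : W ≤ xs N := by
      rw [hWdef]
      have : (xs N - xs 0) * (Px - xs (nn-1)) / (xs nn - xs (nn-1)) ≤ xs N - xs 0 := by
        rw [div_le_iff₀ (by linarith)]
        exact mul_le_mul_of_nonneg_left (by linarith) (by linarith)
      linarith
    have hV1 : ys 0 ≤ V := by
      rw [hVdef]
      have : 0 ≤ (ys M - ys 0) * (Py - ys (mm-1)) / (ys mm - ys (mm-1)) :=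
        div_nonneg (mul_nonneg (by linarith) (by linarith)) (by linarith)
      linarith
    have hV2 : V ≤ ys M := by
      rw [hVdef]
      have : (ys M - ys 0) * (Py - ys (mm-1)) / (ys mm - ys (mm-1)) ≤ ys M - ys 0 := by
        rw [div_le_iff₀ (by linarith)]
        exact mul_le_mul_of_nonneg_left (by linarith) (by linarith)
      linarith
    have hT1W := hT1mem W hW1 hW2
    have hT2V := hT2mem V hV1 hV2
    have hFeq := (hF.2.2.2 nn mm hn1 hn2 hm1 hm2 (T1 W) (Set.mem_Icc.mpr hT1W)
      (T2 V) (Set.mem_Icc.mpr hT2V)).2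
    have hGeq := (hG.2.2.2 nn mm hn1 hn2 hm1 hm2 W (Set.mem_Icc.mpr ⟨hW1, hW2⟩)
      V (Set.mem_Icc.mpr ⟨hV1, hV2⟩)).2
    have hstep1 : F₂ (T1 Px) (T2 Py)
        = c nn mm * F₂ (T1 W) (T2 V) + qMap N M xs ys t c nn mm W V := by
      conv_lhs => rw [← hphiW, ← hphiV, hcommx nn hn1 hn2 W, hcommy mm hm1 hm2 V]
      rw [hFeq, hq nn mm W V]
    have hstep2 : G₂ Px Py = c nn mm * G₂ W V + qMap N M xs ys t c nn mm W V := by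
      conv_lhs => rw [← hphiW, ← hphiV]
      exact hGeq
    have huP : u (Px, Py) = c nn mm * u (W, V) := by
      show F₂ (T1 Px) (T2 Py) - G₂ Px Py = c nn mm * (F₂ (T1 W) (T2 V) - G₂ W V)
      rw [hstep1, hstep2]; ring
    have hWVmem : (W, V) ∈ SS :=
      Set.mem_prod.mpr ⟨Set.mem_Icc.mpr ⟨hW1, hW2⟩, Set.mem_Icc.mpr ⟨hV1, hV2⟩⟩
    calc |u (Px, Py)| = |c nn mm| * |u (W, V)| := by rw [huP, abs_mul]
      _ ≤ γ * D := mul_le_mul (hcle nn mm hn1 hn2 hm1 hm2) (hub _ hWVmem) (abs_nonneg _) hγ0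
  have hDle : D ≤ γ * D := by
    rw [hDdef]
    apply csSup_le (hSSne.image _)
    rintro v ⟨P, hP, rfl⟩
    exact hkey P hP
  have hDz : D = 0 := le_antisymm (by nlinarith) hD0
  have hu0 : ∀ P ∈ SS, u P = 0 := by
    intro P hP
    have h1 := hub P hP
    rw [hDz] at h1
    exact abs_eq_zero.mp (le_antisymm h1 (abs_nonneg _))
  -- conclusion
  intro X hX Y hY
  obtain ⟨hX1, hX2⟩ := Set.mem_Icc.mp hX
  obtain ⟨hY1, hY2⟩ := Set.mem_Icc.mp hY
  have hPmem : (X, Y) ∈ SS := Set.mem_prod.mpr ⟨hX, hY⟩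
  have hG2 : G₂ X Y = F₂ (T1 X) (T2 Y) := by
    have h := hu0 (X, Y) hPmem
    have h' : F₂ (T1 X) (T2 Y) - G₂ X Y = 0 := h
    linarith
  rw [hG2]
  have hXS := hsub hPmem
  obtain ⟨hXSx, hXSy⟩ := Set.mem_prod.mp hXS
  have hT1X := hT1mem X hX1 hX2
  have hT2Y := hT2mem Y hY1 hY2
  have hbound := hH2 X hXSx Y hXSy (T1 X) (Set.mem_Icc.mpr hT1X) (T2 Y) (Set.mem_Icc.mpr hT2Y)
  set w := (X - xs 0) / (xs N - xs 0) with hwdef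
  set v := (Y - ys 0) / (ys M - ys 0) with hvdef
  have hw0 : 0 ≤ w := div_nonneg (by linarith) (by linarith)
  have hw1 : w ≤ 1 := (div_le_one (by linarith)).mpr (by linarith)
  have hv0 : 0 ≤ v := div_nonneg (by linarith) (by linarith)
  have hv1 : v ≤ 1 := (div_le_one (by linarith)).mpr (by linarith)
  have hid1 : X - T1 X = (1 - w) * (xs 0 - x 0) + w * (xs N - x N) := by
    simp only [hT1]
    rw [hwdef, hrdef]
    field_simp
    ring
  have hid2 : Y - T2 Y = (1 - v) * (ys 0 - y 0) + v * (ys M - y M) := by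
    simp only [hT2]
    rw [hvdef, hsdef]
    field_simp
    ring
  have hA : |X - T1 X| ≤ max |x 0 - xs 0| |x N - xs N| := by
    rw [hid1]
    have h1 : |(1 - w) * (xs 0 - x 0) + w * (xs N - x N)|
        ≤ (1 - w) * |xs 0 - x 0| + w * |xs N - x N| := by
      refine (abs_add_le _ _).trans ?_
      rw [abs_mul, abs_mul, abs_of_nonneg (by linarith : (0:ℝ) ≤ 1 - w), abs_of_nonneg hw0]
    refine h1.trans ?_
    rw [abs_sub_comm (xs 0), abs_sub_comm (xs N)]
    have h2 : (1 - w) * |x 0 - xs 0| ≤ (1 - w) * max |x 0 - xs 0| |x N - xs N| :=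
      mul_le_mul_of_nonneg_left (le_max_left _ _) (by linarith)
    have h3 : w * |x N - xs N| ≤ w * max |x 0 - xs 0| |x N - xs N| :=
      mul_le_mul_of_nonneg_left (le_max_right _ _) hw0
    nlinarith [h2, h3]
  have hB : |Y - T2 Y| ≤ max |y 0 - ys 0| |y M - ys M| := by
    rw [hid2]
    have h1 : |(1 - v) * (ys 0 - y 0) + v * (ys M - y M)|
        ≤ (1 - v) * |ys 0 - y 0| + v * |ys M - y M| := by
      refine (abs_add_le _ _).trans ?_
      rw [abs_mul, abs_mul, abs_of_nonneg (by linarith : (0:ℝ) ≤ 1 - v), abs_of_nonneg hv0]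
    refine h1.trans ?_
    rw [abs_sub_comm (ys 0), abs_sub_comm (ys M)]
    have h2 : (1 - v) * |y 0 - ys 0| ≤ (1 - v) * max |y 0 - ys 0| |y M - ys M| :=
      mul_le_mul_of_nonneg_left (le_max_left _ _) (by linarith)
    have h3 : v * |y M - ys M| ≤ v * max |y 0 - ys 0| |y M - ys M| :=
      mul_le_mul_of_nonneg_left (le_max_right _ _) hv0
    nlinarith [h2, h3]
  have hABK : (|X - T1 X| + |Y - T2 Y|) ^ δ ≤ K := by
    rcases max_choice |x 0 - xs 0| |x N - xs N| with hc1 | hc1 <;>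
      rcases max_choice |y 0 - ys 0| |y M - ys M| with hc2 | hc2
    · rw [hc1] at hA; rw [hc2] at hB
      exact le_trans (Real.rpow_le_rpow (by positivity) (by linarith) hδ0.le)
        (hKle 0 0 (Nat.zero_le _) (Nat.zero_le _))
    · rw [hc1] at hA; rw [hc2] at hB
      exact le_trans (Real.rpow_le_rpow (by positivity) (by linarith) hδ0.le)
        (hKle 0 M (Nat.zero_le _) le_rfl)
    · rw [hc1] at hA; rw [hc2] at hB
      exact le_trans (Real.rpow_le_rpow (by positivity) (by linarith) hδ0.le)
        (hKle N 0 le_rfl (Nat.zero_le _))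
    · rw [hc1] at hA; rw [hc2] at hB
      exact le_trans (Real.rpow_le_rpow (by positivity) (by linarith) hδ0.le)
        (hKle N M le_rfl le_rfl)
  have hfac : 1 ≤ (1 + γ) / (1 - γ) := (one_le_div (by linarith)).mpr (by linarith)
  calc |F₂ X Y - F₂ (T1 X) (T2 Y)| ≤ Mb * (|X - T1 X| + |Y - T2 Y|) ^ δ := hbound
    _ ≤ Mb * K := mul_le_mul_of_nonneg_left hABK hMb
    _ ≤ Mb * ((1 + γ) / (1 - γ)) * K := by
        nlinarith [mul_nonneg (mul_nonneg hMb hK0) (sub_nonneg.mpr hfac)]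


end
end

section
/- Let (F₁, F₂) and (G₁, G₂) be the CHFIS pairs, with the same parameters α_{n,m}, β_{n,m}, γ_{n,m}, for generalized interpolation data Δ = {(x_i, y_j, z_{i,j}, t_{i,j})} and Δ* = {(x*_i, y*_j, z_{i,j}, t_{i,j})} respectively, where the knots satisfy the invariance-of-ratio condition and S* ⊆ S, and let R : S → S* be the cell-wise affine transfer map. Suppose M̄ ≥ 0 and δ ∈ (0,1] are such that |F₂(X) − F₂(X̄)| ≤ M̄ · d_M(X,X̄)^δ for all X, X̄ ∈ S. Then sup_{(x,y) ∈ S} |G₂(R(x,y)) − F₂(x,y)| ≤ (2γ/(1−γ)) · M̄ · max{ (|x_n − x*_n| + |y_m − y*_m|)^δ : 0 ≤ n ≤ N, 0 ≤ m ≤ M }, where γ = max_{n,m}|γ_{n,m}|. -/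
open Real Set

noncomputable section

/-!
Under the invariance-of-ratio condition every knot `xs n` is the image of `x n` under the one
affine map `[x₀, x_N] → [xs₀, xs_N]`, so the cell-wise map `R` is a single affine map `L`, and `L`
conjugates `φ_n, ψ_m` to `φ*_n, ψ*_m`. Since `q_{n,m}` is the bilinear interpolant of corner values
that do not involve the knots, `q*_{n,m} ∘ L = q_{n,m}`; hence `G₂ ∘ R` is a continuous solution of
the same functional equation on `S` as `F₂`. The difference of two such solutions is multiplied by
`γ_{n,m}` on the cell `(n, m)`, so at a point where its modulus is maximal that modulus is at most
`|γ_{n,m}|` times itself, hence zero. Thus `G₂ ∘ R = F₂` on `S`, and the bound holds because its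
right-hand side is nonnegative.
-/

theorem knots_lt {N : ℕ} {x : ℕ → ℝ} (hx : ∀ i < N, x i < x (i+1)) {i j : ℕ} (hij : i < j)
    (hj : j ≤ N) : x i < x j :=
  strictMonoOn_Iic_of_lt_succ (ψ := x) hx (mem_Iic.2 (hij.le.trans hj)) (mem_Iic.2 hj) hij

theorem exists_cell {N : ℕ} {x : ℕ → ℝ} (hN : 1 ≤ N) {X : ℝ} (hX : X ∈ Icc (x 0) (x N)) :
    ∃ n, 1 ≤ n ∧ n ≤ N ∧ X ∈ Icc (x (n-1)) (x n) := by
  classical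
  have hex : ∃ n, 1 ≤ n ∧ X ≤ x n := ⟨N, hN, hX.2⟩
  obtain ⟨hn1, hXn⟩ := Nat.find_spec hex
  refine ⟨Nat.find hex, hn1, Nat.find_min' hex ⟨hN, hX.2⟩, ?_, hXn⟩
  rcases eq_or_lt_of_le hn1 with h1 | h1
  · simpa [← h1] using hX.1
  · have := Nat.find_min hex (Nat.sub_lt (by omega) one_pos)
    exact (not_le.1 fun h => this ⟨by omega, h⟩).le

def affineRescale (a b a' b' X : ℝ) : ℝ := a' + (b' - a') * ((X - a) / (b - a))

theorem affineRescale_mem_Icc {a b a' b' X : ℝ} (hab : a < b) (hab' : a' ≤ b')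
    (hX : X ∈ Icc a b) : affineRescale a b a' b' X ∈ Icc a' b' := by
  have hu : (X - a) / (b - a) ∈ Icc (0 : ℝ) 1 :=
    ⟨div_nonneg (by linarith [hX.1]) (by linarith),
      (div_le_one (by linarith)).2 (by linarith [hX.2])⟩
  constructor <;> unfold affineRescale <;> nlinarith [hu.1, hu.2]

theorem affineRescale_affineRescale {a b a' b' : ℝ} (hab : a ≠ b) (hab' : a' ≠ b') (X : ℝ) :
    affineRescale a b a' b' (affineRescale a' b' a b X) = X := by
  have : b - a ≠ 0 := sub_ne_zero.2 hab.symm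
  have : b' - a' ≠ 0 := sub_ne_zero.2 hab'.symm
  unfold affineRescale
  field_simp
  ring

theorem phiMap_eq_affineRescale (N : ℕ) (x : ℕ → ℝ) (n : ℕ) (X : ℝ) :
    phiMap N x n X = affineRescale (x 0) (x N) (x (n-1)) (x n) X := by
  unfold phiMap affineRescale
  ring

section RatioInvariance

variable {N : ℕ} {x xs : ℕ → ℝ}

theorem knot_eq_affineRescale (hx : ∀ i < N, x i < x (i+1)) (hxs : ∀ i < N, xs i < xs (i+1))
    (hr : ∀ n, 1 ≤ n → n ≤ N →
      (x 0 - x N) / (xs 0 - xs N) = (x (n-1) - x n) / (xs (n-1) - xs n))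
    {n : ℕ} (hn : n ≤ N) : xs n = affineRescale (x 0) (x N) (xs 0) (xs N) (x n) := by
  induction n with
  | zero => simp [affineRescale]
  | succ k ih =>
    have hN : x N - x 0 ≠ 0 := (sub_pos.2 (knots_lt hx (by omega) le_rfl)).ne'
    have hsN : xs 0 - xs N ≠ 0 := (sub_neg.2 (knots_lt hxs (by omega) le_rfl)).ne
    have hsk : xs k - xs (k+1) ≠ 0 := (sub_neg.2 (hxs k (by omega))).ne
    have hcross := (div_eq_div_iff hsN hsk).1 (by simpa using hr (k+1) (by omega) hn)
    have ih' := ih (by omega)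
    unfold affineRescale at ih' ⊢
    field_simp at ih' ⊢
    linear_combination ih' + hcross

theorem IsTransfer.eqOn_affineRescale {T : ℝ → ℝ} (hT : IsTransfer N x xs T) (hN : 1 ≤ N)
    (hx : ∀ i < N, x i < x (i+1)) (hxs : ∀ i < N, xs i < xs (i+1))
    (hr : ∀ n, 1 ≤ n → n ≤ N →
      (x 0 - x N) / (xs 0 - xs N) = (x (n-1) - x n) / (xs (n-1) - xs n)) :
    EqOn T (affineRescale (x 0) (x N) (xs 0) (xs N)) (Icc (x 0) (x N)) := by
  intro X hX
  obtain ⟨n, hn1, hnN, hXn⟩ := exists_cell hN hX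
  have hN0 : x N - x 0 ≠ 0 := (sub_pos.2 (knots_lt hx (by omega) le_rfl)).ne'
  have hn0 : x n - x (n-1) ≠ 0 := (sub_pos.2 (knots_lt hx (by omega) hnN)).ne'
  rw [hT n hn1 hnN X hXn, knot_eq_affineRescale hx hxs hr hnN,
    knot_eq_affineRescale hx hxs hr (n.sub_le 1 |>.trans hnN)]
  unfold affineRescale
  field_simp
  ring

theorem phiMap_affineRescale (hx : ∀ i < N, x i < x (i+1)) (hxs : ∀ i < N, xs i < xs (i+1))
    (hr : ∀ n, 1 ≤ n → n ≤ N →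
      (x 0 - x N) / (xs 0 - xs N) = (x (n-1) - x n) / (xs (n-1) - xs n))
    {n : ℕ} (hn1 : 1 ≤ n) (hnN : n ≤ N) (X : ℝ) :
    phiMap N xs n (affineRescale (x 0) (x N) (xs 0) (xs N) X)
      = affineRescale (x 0) (x N) (xs 0) (xs N) (phiMap N x n X) := by
  have hN0 : x N - x 0 ≠ 0 := (sub_pos.2 (knots_lt hx (by omega) le_rfl)).ne'
  have hsN0 : xs N - xs 0 ≠ 0 := (sub_pos.2 (knots_lt hxs (by omega) le_rfl)).ne'
  unfold phiMap
  rw [knot_eq_affineRescale hx hxs hr hnN,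
    knot_eq_affineRescale hx hxs hr (n.sub_le 1 |>.trans hnN)]
  unfold affineRescale
  field_simp
  ring

end RatioInvariance

theorem pMap_bilinear (N M : ℕ) (x y : ℕ → ℝ) (z t : ℕ → ℕ → ℝ) (a b : ℕ → ℕ → ℝ) (n m : ℕ)
    (hx : x 0 ≠ x N) (hy : y 0 ≠ y M) (u v : ℝ) :
    pMap N M x y z t a b n m (x 0 + (x N - x 0) * u) (y 0 + (y M - y 0) * v)
      = (1-u) * (1-v) * (z (n-1) (m-1) - a n m * z 0 0 - b n m * t 0 0)
        + u * (1-v) * (z n (m-1) - a n m * z N 0 - b n m * t N 0)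
        + (1-u) * v * (z (n-1) m - a n m * z 0 M - b n m * t 0 M)
        + u * v * (z n m - a n m * z N M - b n m * t N M) := by
  have : x 0 - x N ≠ 0 := sub_ne_zero.2 hx
  have : y 0 - y M ≠ 0 := sub_ne_zero.2 hy
  unfold pMap kCoef eCoef fCoef gCoef eva
  field_simp
  ring

theorem pMap_affineRescale (N M : ℕ) {x y xs ys : ℕ → ℝ} (z t : ℕ → ℕ → ℝ) (a b : ℕ → ℕ → ℝ)
    (n m : ℕ) (hx : x 0 ≠ x N) (hy : y 0 ≠ y M) (hxs : xs 0 ≠ xs N) (hys : ys 0 ≠ ys M)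
    (X Y : ℝ) :
    pMap N M xs ys z t a b n m (affineRescale (x 0) (x N) (xs 0) (xs N) X)
        (affineRescale (y 0) (y M) (ys 0) (ys M) Y)
      = pMap N M x y z t a b n m X Y := by
  have hX : X = x 0 + (x N - x 0) * ((X - x 0) / (x N - x 0)) := by
    field_simp [sub_ne_zero.2 hx.symm]; ring
  have hY : Y = y 0 + (y M - y 0) * ((Y - y 0) / (y M - y 0)) := by
    field_simp [sub_ne_zero.2 hy.symm]; ring
  conv_rhs => rw [hX, hY]
  rw [affineRescale, affineRescale, pMap_bilinear N M xs ys z t a b n m hxs hys,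
    pMap_bilinear N M x y z t a b n m hx hy]

theorem IsCompact.eqOn_zero_of_forall_eq_mul {α : Type*} [TopologicalSpace α] {K : Set α}
    (hK : IsCompact K) {D : α → ℝ} (hD : ContinuousOn D K)
    (h : ∀ P ∈ K, ∃ Q ∈ K, ∃ r : ℝ, |r| < 1 ∧ D P = r * D Q) : EqOn D 0 K := by
  intro P hP
  obtain ⟨P₀, hP₀, hmax⟩ := hK.exists_isMaxOn ⟨P, hP⟩ hD.abs
  obtain ⟨Q, hQ, r, hr, hP₀Q⟩ := h P₀ hP₀
  have hQP₀ : |D Q| ≤ |D P₀| := hmax hQ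
  have hP₀_eq : |D P₀| = |r| * |D Q| := by rw [hP₀Q, abs_mul]
  have hP₀_zero : |D P₀| = 0 := by nlinarith [abs_nonneg (D Q), abs_nonneg r]
  exact abs_nonpos_iff.1 (hP₀_zero ▸ hmax hP)

def IsSelfAffine (N M : ℕ) (x y : ℕ → ℝ) (c : ℕ → ℕ → ℝ) (q : ℕ → ℕ → ℝ → ℝ → ℝ)
    (F : ℝ → ℝ → ℝ) : Prop :=
  ∀ n m, 1 ≤ n → n ≤ N → 1 ≤ m → m ≤ M → ∀ X ∈ Icc (x 0) (x N), ∀ Y ∈ Icc (y 0) (y M),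
    F (phiMap N x n X) (phiMap M y m Y) = c n m * F X Y + q n m X Y

theorem IsCHFIS.isSelfAffine_snd {N M : ℕ} {x y : ℕ → ℝ} {z t : ℕ → ℕ → ℝ}
    {a b c : ℕ → ℕ → ℝ} {F₁ F₂ : ℝ → ℝ → ℝ} (h : IsCHFIS N M x y z t a b c F₁ F₂) :
    IsSelfAffine N M x y c (qMap N M x y t c) F₂ :=
  fun n m h1 h2 h3 h4 X hX Y hY => (h.2.2.2 n m h1 h2 h3 h4 X hX Y hY).2

theorem DataOK.abs_lt_one_right {N M : ℕ} {x y : ℕ → ℝ} {a b c : ℕ → ℕ → ℝ}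
    (hD : DataOK N M x y a b c) :
    ∀ n m, 1 ≤ n → n ≤ N → 1 ≤ m → m ≤ M → |c n m| < 1 :=
  fun n m h1 h2 h3 h4 => (le_add_of_nonneg_left (abs_nonneg _)).trans_lt (hD.hbc n m h1 h2 h3 h4)

section SelfAffine

variable {N M : ℕ} {x y : ℕ → ℝ} {c : ℕ → ℕ → ℝ}

theorem exists_phiMap_eq (hN : 1 ≤ N) (hx : ∀ i < N, x i < x (i+1)) {X : ℝ}
    (hX : X ∈ Icc (x 0) (x N)) :
    ∃ n, 1 ≤ n ∧ n ≤ N ∧ ∃ U ∈ Icc (x 0) (x N), phiMap N x n U = X := by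
  obtain ⟨n, hn1, hnN, hXn⟩ := exists_cell hN hX
  have hcell : x (n-1) < x n := knots_lt hx (by omega) hnN
  have hS : x 0 < x N := knots_lt hx (by omega) le_rfl
  refine ⟨n, hn1, hnN, affineRescale (x (n-1)) (x n) (x 0) (x N) X,
    affineRescale_mem_Icc hcell hS.le hXn, ?_⟩
  rw [phiMap_eq_affineRescale, affineRescale_affineRescale hS.ne hcell.ne]

theorem IsSelfAffine.eqOn {q : ℕ → ℕ → ℝ → ℝ → ℝ} {F H : ℝ → ℝ → ℝ} (hN : 1 ≤ N) (hM : 1 ≤ M)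
    (hx : ∀ i < N, x i < x (i+1)) (hy : ∀ j < M, y j < y (j+1))
    (hc : ∀ n m, 1 ≤ n → n ≤ N → 1 ≤ m → m ≤ M → |c n m| < 1)
    (hF : IsSelfAffine N M x y c q F) (hH : IsSelfAffine N M x y c q H)
    (hFc : ContinuousOn (fun P : ℝ × ℝ => F P.1 P.2) (Icc (x 0) (x N) ×ˢ Icc (y 0) (y M)))
    (hHc : ContinuousOn (fun P : ℝ × ℝ => H P.1 P.2) (Icc (x 0) (x N) ×ˢ Icc (y 0) (y M))) :
    ∀ X ∈ Icc (x 0) (x N), ∀ Y ∈ Icc (y 0) (y M), H X Y = F X Y := by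
  have hzero := (isCompact_Icc.prod isCompact_Icc).eqOn_zero_of_forall_eq_mul
    (D := fun P : ℝ × ℝ => H P.1 P.2 - F P.1 P.2) (hHc.sub hFc) ?_
  · intro X hX Y hY
    exact sub_eq_zero.1 (hzero (x := (X, Y)) ⟨hX, hY⟩)
  rintro ⟨X, Y⟩ ⟨hX, hY⟩
  obtain ⟨n, hn1, hnN, U, hU, rfl⟩ := exists_phiMap_eq hN hx hX
  obtain ⟨m, hm1, hmM, V, hV, rfl⟩ := exists_phiMap_eq hM hy hY
  refine ⟨(U, V), ⟨hU, hV⟩, c n m, hc n m hn1 hnN hm1 hmM, ?_⟩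
  rw [hF n m hn1 hnN hm1 hmM U hU V hV, hH n m hn1 hnN hm1 hmM U hU V hV]
  ring

end SelfAffine

section Transfer

variable {N M : ℕ} {x y xs ys : ℕ → ℝ}

theorem IsSelfAffine.comp_affineRescale {c : ℕ → ℕ → ℝ} {t : ℕ → ℕ → ℝ} {G : ℝ → ℝ → ℝ}
    (hx : ∀ i < N, x i < x (i+1)) (hy : ∀ j < M, y j < y (j+1))
    (hxs : ∀ i < N, xs i < xs (i+1)) (hys : ∀ j < M, ys j < ys (j+1))
    (hr : RatioInv N M x y xs ys) (hG : IsSelfAffine N M xs ys c (qMap N M xs ys t c) G) :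
    IsSelfAffine N M x y c (qMap N M x y t c) fun X Y =>
      G (affineRescale (x 0) (x N) (xs 0) (xs N) X)
        (affineRescale (y 0) (y M) (ys 0) (ys M) Y) := by
  intro n m hn1 hnN hm1 hmM X hX Y hY
  have hS : x 0 < x N := knots_lt hx (by omega) le_rfl
  have hT : y 0 < y M := knots_lt hy (by omega) le_rfl
  have hSs : xs 0 < xs N := knots_lt hxs (by omega) le_rfl
  have hTs : ys 0 < ys M := knots_lt hys (by omega) le_rfl
  dsimp only
  rw [← phiMap_affineRescale hx hxs hr.1 hn1 hnN, ← phiMap_affineRescale hy hys hr.2 hm1 hmM,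
    hG n m hn1 hnN hm1 hmM _ (affineRescale_mem_Icc hS hSs.le hX)
      _ (affineRescale_mem_Icc hT hTs.le hY),
    qMap, pMap_affineRescale N M t t c _ n m hS.ne hT.ne hSs.ne hTs.ne, qMap]

theorem ContinuousOn.comp_affineRescale {G : ℝ → ℝ → ℝ}
    (hG : ContinuousOn (fun P : ℝ × ℝ => G P.1 P.2) (Icc (xs 0) (xs N) ×ˢ Icc (ys 0) (ys M)))
    (hS : x 0 < x N) (hT : y 0 < y M) (hSs : xs 0 ≤ xs N) (hTs : ys 0 ≤ ys M) :
    ContinuousOn (fun P : ℝ × ℝ => G (affineRescale (x 0) (x N) (xs 0) (xs N) P.1)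
      (affineRescale (y 0) (y M) (ys 0) (ys M) P.2)) (Icc (x 0) (x N) ×ˢ Icc (y 0) (y M)) := by
  refine hG.comp (f := fun P : ℝ × ℝ => (affineRescale (x 0) (x N) (xs 0) (xs N) P.1,
    affineRescale (y 0) (y M) (ys 0) (ys M) P.2)) ?_ ?_
  · unfold affineRescale
    fun_prop
  · exact fun P hP => ⟨affineRescale_mem_Icc hS hSs hP.1, affineRescale_mem_Icc hT hTs hP.2⟩

end Transfer

theorem supParam_nonneg (N M : ℕ) (c : ℕ → ℕ → ℝ) : 0 ≤ supParam N M c :=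
  Real.sSup_nonneg (by rintro v ⟨n, m, -, -, -, -, rfl⟩; exact abs_nonneg _)

theorem supParam_lt_one {N M : ℕ} {c : ℕ → ℕ → ℝ} (hN : 1 ≤ N) (hM : 1 ≤ M)
    (hc : ∀ n m, 1 ≤ n → n ≤ N → 1 ≤ m → m ≤ M → |c n m| < 1) : supParam N M c < 1 := by
  have hfin : {v : ℝ | ∃ n m, 1 ≤ n ∧ n ≤ N ∧ 1 ≤ m ∧ m ≤ M ∧ v = |c n m|}.Finite :=
    ((finite_Icc 1 N).prod (finite_Icc 1 M) |>.image fun p => |c p.1 p.2|).subset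
      (by rintro v ⟨n, m, h1, h2, h3, h4, rfl⟩; exact ⟨(n, m), ⟨⟨h1, h2⟩, h3, h4⟩, rfl⟩)
  rw [supParam, hfin.csSup_lt_iff ⟨_, 1, 1, le_rfl, hN, le_rfl, hM, rfl⟩]
  rintro v ⟨n, m, h1, h2, h3, h4, rfl⟩
  exact hc n m h1 h2 h3 h4

theorem supKnotDiff_nonneg (N M : ℕ) (x xs y ys : ℕ → ℝ) (d : ℝ) :
    0 ≤ supKnotDiff N M x xs y ys d :=
  Real.sSup_nonneg (by rintro v ⟨n, m, -, -, rfl⟩; positivity)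

theorem chfis_stability_indep_F2_R_general (N M : ℕ) (x y xs ys : ℕ → ℝ) (z t : ℕ → ℕ → ℝ)
    (a b c : ℕ → ℕ → ℝ)
    (hD : DataOK N M x y a b c) (hDs : DataOK N M xs ys a b c)
    (hratio : RatioInv N M x y xs ys)
    (RX RY : ℝ → ℝ)
    (hRX : IsTransfer N x xs RX) (hRY : IsTransfer M y ys RY)
    (F₁ F₂ G₁ G₂ : ℝ → ℝ → ℝ)
    (hF : IsCHFIS N M x y z t a b c F₁ F₂)
    (hG : IsCHFIS N M xs ys z t a b c G₁ G₂)
    (Mb δ : ℝ) (hMb : 0 ≤ Mb) :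
    ∀ X ∈ Icc (x 0) (x N), ∀ Y ∈ Icc (y 0) (y M),
      |G₂ (RX X) (RY Y) - F₂ X Y| ≤
        2 * supParam N M c / (1 - supParam N M c) * Mb
          * supKnotDiff N M x xs y ys δ := by
  intro X hX Y hY
  have hGR : G₂ (affineRescale (x 0) (x N) (xs 0) (xs N) X)
      (affineRescale (y 0) (y M) (ys 0) (ys M) Y) = F₂ X Y :=
    hF.isSelfAffine_snd.eqOn hD.hN hD.hM hD.hx hD.hy hD.abs_lt_one_right
      (hG.isSelfAffine_snd.comp_affineRescale hD.hx hD.hy hDs.hx hDs.hy hratio) hF.2.1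
      (hG.2.1.comp_affineRescale (knots_lt hD.hx hD.hN le_rfl) (knots_lt hD.hy hD.hM le_rfl)
        (knots_lt hDs.hx hD.hN le_rfl).le (knots_lt hDs.hy hD.hM le_rfl).le) X hX Y hY
  rw [hRX.eqOn_affineRescale hD.hN hD.hx hDs.hx hratio.1 hX,
    hRY.eqOn_affineRescale hD.hM hD.hy hDs.hy hratio.2 hY, hGR, sub_self, abs_zero]
  have hΓ := supParam_lt_one hD.hN hD.hM hD.abs_lt_one_right
  have hΓ₀ := supParam_nonneg N M c
  exact mul_nonneg (mul_nonneg (div_nonneg (by linarith) (by linarith)) hMb)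
    (supKnotDiff_nonneg N M x xs y ys δ)

/-- the bound `‖G₂ ∘ R - F₂‖_∞ ≤ (2γ/(1-γ)) M̄ max (…)^δ` on `S`, where `R`
is the cell-wise affine transfer map `S → S*`. -/
theorem chfis_stability_indep_F2_R (N M : ℕ) (x y xs ys : ℕ → ℝ) (z t : ℕ → ℕ → ℝ)
    (a b c : ℕ → ℕ → ℝ)
    (hD : DataOK N M x y a b c) (hDs : DataOK N M xs ys a b c)
    (hratio : RatioInv N M x y xs ys)
    (hsub : Icc (xs 0) (xs N) ×ˢ Icc (ys 0) (ys M) ⊆ Icc (x 0) (x N) ×ˢ Icc (y 0) (y M))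
    (RX RY : ℝ → ℝ)
    (hRX : IsTransfer N x xs RX) (hRY : IsTransfer M y ys RY)
    (F₁ F₂ G₁ G₂ : ℝ → ℝ → ℝ)
    (hF : IsCHFIS N M x y z t a b c F₁ F₂)
    (hG : IsCHFIS N M xs ys z t a b c G₁ G₂)
    (Mb δ : ℝ) (hMb : 0 ≤ Mb) (hδ : δ ∈ Set.Ioc (0:ℝ) 1)
    (hH2 : ∀ X ∈ Icc (x 0) (x N), ∀ Y ∈ Icc (y 0) (y M),
      ∀ X' ∈ Icc (x 0) (x N), ∀ Y' ∈ Icc (y 0) (y M),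
        |F₂ X Y - F₂ X' Y'| ≤ Mb * (|X - X'| + |Y - Y'|) ^ δ) :
    ∀ X ∈ Icc (x 0) (x N), ∀ Y ∈ Icc (y 0) (y M),
      |G₂ (RX X) (RY Y) - F₂ X Y| ≤
        2 * supParam N M c / (1 - supParam N M c) * Mb
          * supKnotDiff N M x xs y ys δ :=
  chfis_stability_indep_F2_R_general N M x y xs ys z t a b c hD hDs hratio RX RY hRX hRY F₁ F₂ G₁ G₂
    hF hG Mb δ hMb

end
end

section
/- Consider generalized interpolation data with N = M, x₀ = y₀ = 0 and x_N = y_N = 1/2, and let Z_max = max{ |z_{i,j} − z_{k,l}| : 0 ≤ i,j,k,l ≤ N } and T_max = max{ |t_{i,j} − t_{k,l}| : 0 ≤ i,j,k,l ≤ N }. Then for every 1 ≤ n, m ≤ N and all (x,y), (x̄,ȳ) ∈ [0,1/2] × [0,1/2]: |p_{n,m}(x,y) − p_{n,m}(x̄,ȳ)| ≤ 8 · [(1+α) Z_max + β T_max] · (|x − x̄| + |y − ȳ|), where α = max_{n,m}|α_{n,m}| and β = max_{n,m}|β_{n,m}|. -/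
open Real Set

noncomputable section

lemma supPairDiff_ge (N : ℕ) (z : ℕ → ℕ → ℝ) {i j k l : ℕ}
    (hi : i ≤ N) (hj : j ≤ N) (hk : k ≤ N) (hl : l ≤ N) :
    |z i j - z k l| ≤ supPairDiff N z := by
  have hfin : ({v : ℝ | ∃ i j k l, i ≤ N ∧ j ≤ N ∧ k ≤ N ∧ l ≤ N ∧ v = |z i j - z k l|}).Finite := by
    apply Set.Finite.subset
      ((((Set.finite_Iic N).prod (Set.finite_Iic N)).prod
        ((Set.finite_Iic N).prod (Set.finite_Iic N))).image
        (fun p : (ℕ × ℕ) × (ℕ × ℕ) => |z p.1.1 p.1.2 - z p.2.1 p.2.2|))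
    rintro v ⟨i, j, k, l, hi, hj, hk, hl, rfl⟩
    exact ⟨((i, j), (k, l)), ⟨⟨hi, hj⟩, hk, hl⟩, rfl⟩
  exact le_csSup hfin.bddAbove ⟨i, j, k, l, hi, hj, hk, hl, rfl⟩

lemma supParam_ge (N M : ℕ) (a : ℕ → ℕ → ℝ) {n m : ℕ}
    (h1 : 1 ≤ n) (h2 : n ≤ N) (h3 : 1 ≤ m) (h4 : m ≤ M) :
    |a n m| ≤ supParam N M a := by
  have hfin : ({v : ℝ | ∃ n m, 1 ≤ n ∧ n ≤ N ∧ 1 ≤ m ∧ m ≤ M ∧ v = |a n m|}).Finite := by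
    apply Set.Finite.subset
      (((Set.finite_Iic N).prod (Set.finite_Iic M)).image
        (fun p : ℕ × ℕ => |a p.1 p.2|))
    rintro v ⟨n, m, _, hn, _, hm, rfl⟩
    exact ⟨(n, m), ⟨hn, hm⟩, rfl⟩
  exact le_csSup hfin.bddAbove ⟨n, m, h1, h2, h3, h4, rfl⟩

set_option maxHeartbeats 1000000 in
/-- the Lipschitz bound for `p_{n,m}` on `[0,1/2] × [0,1/2]`. -/
theorem pMap_lipschitz (N : ℕ) (x y : ℕ → ℝ) (z t : ℕ → ℕ → ℝ) (a b c : ℕ → ℕ → ℝ)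
    (hD : DataOK N N x y a b c)
    (hx0 : x 0 = 0) (hy0 : y 0 = 0) (hxN : x N = 1/2) (hyN : y N = 1/2) :
    ∀ n m, 1 ≤ n → n ≤ N → 1 ≤ m → m ≤ N →
      ∀ X ∈ Icc (0:ℝ) (1/2), ∀ Y ∈ Icc (0:ℝ) (1/2),
        ∀ X' ∈ Icc (0:ℝ) (1/2), ∀ Y' ∈ Icc (0:ℝ) (1/2),
          |pMap N N x y z t a b n m X Y - pMap N N x y z t a b n m X' Y'| ≤
            8 * ((1 + supParam N N a) * supPairDiff N z + supParam N N b * supPairDiff N t)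
              * (|X - X'| + |Y - Y'|) := by
  intro n m hn1 hnN hm1 hmN X hX Y hY X' hX' Y' hY'
  set α := supParam N N a with hαdef
  set β := supParam N N b with hβdef
  set Z := supPairDiff N z with hZdef
  set T := supPairDiff N t with hTdef
  have hn1N : n - 1 ≤ N := le_trans (Nat.sub_le n 1) hnN
  have hm1N : m - 1 ≤ N := le_trans (Nat.sub_le m 1) hmN
  have hα : |a n m| ≤ α := supParam_ge N N a hn1 hnN hm1 hmN
  have hβ : |b n m| ≤ β := supParam_ge N N b hn1 hnN hm1 hmN
  have hα0 : 0 ≤ α := le_trans (abs_nonneg _) hα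
  have hβ0 : 0 ≤ β := le_trans (abs_nonneg _) hβ
  have hZ0 : 0 ≤ Z := le_trans (abs_nonneg _)
    (supPairDiff_ge N z (Nat.zero_le N) (Nat.zero_le N) (Nat.zero_le N) (Nat.zero_le N))
  have hT0 : 0 ≤ T := le_trans (abs_nonneg _)
    (supPairDiff_ge N t (Nat.zero_le N) (Nat.zero_le N) (Nat.zero_le N) (Nat.zero_le N))
  have hC0 : 0 ≤ (1 + α) * Z + β * T := by positivity
  -- bounds on eva
  have hzeva : |eva N N z| ≤ 2 * Z := by
    have h1 : |z N N - z N 0| ≤ Z := supPairDiff_ge N z le_rfl le_rfl le_rfl (Nat.zero_le N)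
    have h2 : |z 0 0 - z 0 N| ≤ Z := supPairDiff_ge N z (Nat.zero_le N) (Nat.zero_le N) (Nat.zero_le N) le_rfl
    have heq : eva N N z = (z N N - z N 0) + (z 0 0 - z 0 N) := by simp [eva]; ring
    rw [heq]
    exact (abs_add_le _ _).trans (by linarith)
  have hteva : |eva N N t| ≤ 2 * T := by
    have h1 : |t N N - t N 0| ≤ T := supPairDiff_ge N t le_rfl le_rfl le_rfl (Nat.zero_le N)
    have h2 : |t 0 0 - t 0 N| ≤ T := supPairDiff_ge N t (Nat.zero_le N) (Nat.zero_le N) (Nat.zero_le N) le_rfl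
    have heq : eva N N t = (t N N - t N 0) + (t 0 0 - t 0 N) := by simp [eva]; ring
    rw [heq]
    exact (abs_add_le _ _).trans (by linarith)
  have hazeva : |a n m * eva N N z| ≤ α * (2 * Z) := by
    rw [abs_mul]; exact mul_le_mul hα hzeva (abs_nonneg _) hα0
  have hbteva : |b n m * eva N N t| ≤ β * (2 * T) := by
    rw [abs_mul]; exact mul_le_mul hβ hteva (abs_nonneg _) hβ0
  -- bound on g
  have hgD : |z (n-1) (m-1) - z (n-1) m - z n (m-1) + z n m
      - a n m * eva N N z - b n m * eva N N t| ≤ 2 * ((1 + α) * Z + β * T) := by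
    have h1 : |z (n-1) (m-1) - z (n-1) m| ≤ Z := supPairDiff_ge N z hn1N hm1N hn1N hmN
    have h2 : |z n m - z n (m-1)| ≤ Z := supPairDiff_ge N z hnN hmN hnN hm1N
    obtain ⟨a1, a2⟩ := abs_le.mp h1
    obtain ⟨b1, b2⟩ := abs_le.mp h2
    obtain ⟨c1, c2⟩ := abs_le.mp hazeva
    obtain ⟨d1, d2⟩ := abs_le.mp hbteva
    rw [abs_le]; constructor <;> linarith
  have hgval : gCoef N N x y z t a b n m
      = 4 * (z (n-1) (m-1) - z (n-1) m - z n (m-1) + z n m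
        - a n m * eva N N z - b n m * eva N N t) := by
    simp only [gCoef, hx0, hy0, hxN, hyN]; ring
  have hg : |gCoef N N x y z t a b n m| ≤ 8 * ((1 + α) * Z + β * T) := by
    rw [hgval, abs_mul]
    rw [show |(4:ℝ)| = 4 by norm_num]
    linarith
  -- bound on e
  have he : |eCoef N N x y z t a b n m| ≤ 2 * ((1 + α) * Z + β * T) := by
    have heval : eCoef N N x y z t a b n m
        = -2 * (z (n-1) (m-1) - z n (m-1) - a n m * (z 0 0 - z N 0)
          - b n m * (t 0 0 - t N 0)) := by
      simp only [eCoef, hx0, hy0, hxN]; ring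
    have h1 : |z (n-1) (m-1) - z n (m-1)| ≤ Z := supPairDiff_ge N z hn1N hm1N hnN hm1N
    have h2 : |z 0 0 - z N 0| ≤ Z := supPairDiff_ge N z (Nat.zero_le N) (Nat.zero_le N) le_rfl (Nat.zero_le N)
    have h3 : |t 0 0 - t N 0| ≤ T := supPairDiff_ge N t (Nat.zero_le N) (Nat.zero_le N) le_rfl (Nat.zero_le N)
    have h2' : |a n m * (z 0 0 - z N 0)| ≤ α * Z := by
      rw [abs_mul]; exact mul_le_mul hα h2 (abs_nonneg _) hα0
    have h3' : |b n m * (t 0 0 - t N 0)| ≤ β * T := by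
      rw [abs_mul]; exact mul_le_mul hβ h3 (abs_nonneg _) hβ0
    rw [heval, abs_mul, show |(-2:ℝ)| = 2 by norm_num]
    obtain ⟨a1, a2⟩ := abs_le.mp h1
    obtain ⟨c1, c2⟩ := abs_le.mp h2'
    obtain ⟨d1, d2⟩ := abs_le.mp h3'
    have : |z (n-1) (m-1) - z n (m-1) - a n m * (z 0 0 - z N 0)
        - b n m * (t 0 0 - t N 0)| ≤ (1 + α) * Z + β * T := by
      rw [abs_le]; constructor <;> linarith
    linarith
  -- bound on f
  have hf : |fCoef N N x y z t a b n m| ≤ 2 * ((1 + α) * Z + β * T) := by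
    have hfval : fCoef N N x y z t a b n m
        = -2 * (z (n-1) (m-1) - z (n-1) m - a n m * (z 0 0 - z 0 N)
          - b n m * (t 0 0 - t 0 N)) := by
      simp only [fCoef, hx0, hy0, hyN]; ring
    have h1 : |z (n-1) (m-1) - z (n-1) m| ≤ Z := supPairDiff_ge N z hn1N hm1N hn1N hmN
    have h2 : |z 0 0 - z 0 N| ≤ Z := supPairDiff_ge N z (Nat.zero_le N) (Nat.zero_le N) (Nat.zero_le N) le_rfl
    have h3 : |t 0 0 - t 0 N| ≤ T := supPairDiff_ge N t (Nat.zero_le N) (Nat.zero_le N) (Nat.zero_le N) le_rfl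
    have h2' : |a n m * (z 0 0 - z 0 N)| ≤ α * Z := by
      rw [abs_mul]; exact mul_le_mul hα h2 (abs_nonneg _) hα0
    have h3' : |b n m * (t 0 0 - t 0 N)| ≤ β * T := by
      rw [abs_mul]; exact mul_le_mul hβ h3 (abs_nonneg _) hβ0
    rw [hfval, abs_mul, show |(-2:ℝ)| = 2 by norm_num]
    obtain ⟨a1, a2⟩ := abs_le.mp h1
    obtain ⟨c1, c2⟩ := abs_le.mp h2'
    obtain ⟨d1, d2⟩ := abs_le.mp h3'
    have : |z (n-1) (m-1) - z (n-1) m - a n m * (z 0 0 - z 0 N)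
        - b n m * (t 0 0 - t 0 N)| ≤ (1 + α) * Z + β * T := by
      rw [abs_le]; constructor <;> linarith
    linarith
  -- combine
  obtain ⟨hX0, hX1⟩ := hX
  obtain ⟨hY0, hY1⟩ := hY
  obtain ⟨hX'0, hX'1⟩ := hX'
  obtain ⟨hY'0, hY'1⟩ := hY'
  have hXabs : |X| ≤ 1/2 := abs_le.mpr ⟨by linarith, hX1⟩
  have hY'abs : |Y'| ≤ 1/2 := abs_le.mpr ⟨by linarith, hY'1⟩
  have hform : pMap N N x y z t a b n m X Y - pMap N N x y z t a b n m X' Y'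
      = eCoef N N x y z t a b n m * (X - X') + fCoef N N x y z t a b n m * (Y - Y')
        + gCoef N N x y z t a b n m * (X * (Y - Y') + Y' * (X - X')) := by
    simp only [pMap]; ring
  have hu0 : (0:ℝ) ≤ |X - X'| := abs_nonneg _
  have hv0 : (0:ℝ) ≤ |Y - Y'| := abs_nonneg _
  have t1 : |eCoef N N x y z t a b n m * (X - X')|
      ≤ 2 * ((1 + α) * Z + β * T) * |X - X'| := by
    rw [abs_mul]; exact mul_le_mul_of_nonneg_right he hu0
  have t2 : |fCoef N N x y z t a b n m * (Y - Y')|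
      ≤ 2 * ((1 + α) * Z + β * T) * |Y - Y'| := by
    rw [abs_mul]; exact mul_le_mul_of_nonneg_right hf hv0
  have t3 : |gCoef N N x y z t a b n m * (X * (Y - Y') + Y' * (X - X'))|
      ≤ 8 * ((1 + α) * Z + β * T) * (1/2 * |Y - Y'| + 1/2 * |X - X'|) := by
    rw [abs_mul]
    have hin : |X * (Y - Y') + Y' * (X - X')| ≤ 1/2 * |Y - Y'| + 1/2 * |X - X'| := by
      refine (abs_add_le _ _).trans ?_
      rw [abs_mul, abs_mul]
      have := mul_le_mul_of_nonneg_right hXabs hv0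
      have := mul_le_mul_of_nonneg_right hY'abs hu0
      linarith
    exact mul_le_mul hg hin (abs_nonneg _) (by positivity)
  rw [hform]
  calc |eCoef N N x y z t a b n m * (X - X') + fCoef N N x y z t a b n m * (Y - Y')
        + gCoef N N x y z t a b n m * (X * (Y - Y') + Y' * (X - X'))|
      ≤ |eCoef N N x y z t a b n m * (X - X') + fCoef N N x y z t a b n m * (Y - Y')|
        + |gCoef N N x y z t a b n m * (X * (Y - Y') + Y' * (X - X'))| := abs_add_le _ _
    _ ≤ |eCoef N N x y z t a b n m * (X - X')| + |fCoef N N x y z t a b n m * (Y - Y')|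
        + |gCoef N N x y z t a b n m * (X * (Y - Y') + Y' * (X - X'))| := by
          have := abs_add_le (eCoef N N x y z t a b n m * (X - X'))
            (fCoef N N x y z t a b n m * (Y - Y'))
          linarith
    _ ≤ 8 * ((1 + α) * Z + β * T) * (|X - X'| + |Y - Y'|) := by
          linarith [mul_nonneg hC0 hu0, mul_nonneg hC0 hv0]

end
end

section
/- Consider generalized interpolation data with N = M, x₀ = y₀ = 0 and x_N = y_N = 1/2, and let T_max = max{ |t_{i,j} − t_{k,l}| : 0 ≤ i,j,k,l ≤ N }. Then for every 1 ≤ n, m ≤ N and all (x,y), (x̄,ȳ) ∈ [0,1/2] × [0,1/2]: |q_{n,m}(x,y) − q_{n,m}(x̄,ȳ)| ≤ 8 · (1+γ) · T_max · (|x − x̄| + |y − ȳ|), where γ = max_{n,m}|γ_{n,m}|. -/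
open Real Set

noncomputable section

/-!
`q_{n,m}` is bilinear, so `q(X, Y) - q(X', Y') = (ẽ + g̃ Y)(X - X') + (f̃ + g̃ X')(Y - Y')`.
Each coefficient is a combination of at most two differences `t_{i,j} - t_{k,l}` and one
`γ_{n,m}`-multiple of at most two such differences, divided by `x_N - x₀`, `y_M - y₀` or their
product; on `[0, 1/2]²` this gives `|ẽ|, |f̃| ≤ 2(1+γ)T` and `|g̃| ≤ 8(1+γ)T`, whence the constant
`2(1+γ)T + (1/2)·8(1+γ)T = 6(1+γ)T ≤ 8(1+γ)T`.
-/

theorem abs_sub_le_supPairDiff (N : ℕ) (t : ℕ → ℕ → ℝ) :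
    ∀ i ≤ N, ∀ j ≤ N, ∀ k ≤ N, ∀ l ≤ N, |t i j - t k l| ≤ supPairDiff N t := by
  have hfin : {v : ℝ | ∃ i j k l, i ≤ N ∧ j ≤ N ∧ k ≤ N ∧ l ≤ N ∧ v = |t i j - t k l|} ⊆
      Set.range fun p : Fin (N + 1) × Fin (N + 1) × Fin (N + 1) × Fin (N + 1) =>
        |t p.1 p.2.1 - t p.2.2.1 p.2.2.2| := by
    rintro v ⟨i, j, k, l, hi, hj, hk, hl, rfl⟩
    exact ⟨(⟨i, by omega⟩, ⟨j, by omega⟩, ⟨k, by omega⟩, ⟨l, by omega⟩), rfl⟩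
  intro i hi j hj k hk l hl
  exact le_csSup ((Set.finite_range _).subset hfin).bddAbove ⟨i, j, k, l, hi, hj, hk, hl, rfl⟩

theorem abs_le_supParam {N M n m : ℕ} (a : ℕ → ℕ → ℝ) (hn : 1 ≤ n) (hnN : n ≤ N) (hm : 1 ≤ m)
    (hmM : m ≤ M) : |a n m| ≤ supParam N M a := by
  have hfin : {v : ℝ | ∃ n m, 1 ≤ n ∧ n ≤ N ∧ 1 ≤ m ∧ m ≤ M ∧ v = |a n m|} ⊆
      Set.range fun p : Fin (N + 1) × Fin (M + 1) => |a p.1 p.2| := by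
    rintro v ⟨n, m, -, hn, -, hm, rfl⟩
    exact ⟨(⟨n, by omega⟩, ⟨m, by omega⟩), rfl⟩
  exact le_csSup ((Set.finite_range _).subset hfin).bddAbove ⟨n, m, hn, hnN, hm, hmM, rfl⟩

-- When a denominator vanishes, both sides of these bounds are `0` (as `a / 0 = 0`).

section CoefficientBounds

variable {N M n m : ℕ} {x y : ℕ → ℝ} {t c : ℕ → ℕ → ℝ} {T γ : ℝ}

theorem abs_eva_le (hT : ∀ i ≤ N, ∀ j ≤ M, ∀ k ≤ N, ∀ l ≤ M, |t i j - t k l| ≤ T) :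
    |eva N M t| ≤ 2 * T := by
  have h₁ := hT N le_rfl M le_rfl N le_rfl 0 M.zero_le
  have h₂ := hT 0 N.zero_le 0 M.zero_le 0 N.zero_le M M.le_refl
  calc |eva N M t| = |(t N M - t N 0) + (t 0 0 - t 0 M)| := by rw [eva]; ring_nf
    _ ≤ 2 * T := (abs_add_le _ _).trans (by linarith)

theorem abs_gCoef_le (hT : ∀ i ≤ N, ∀ j ≤ M, ∀ k ≤ N, ∀ l ≤ M, |t i j - t k l| ≤ T)
    (hγ : |c n m| ≤ γ) (hnN : n ≤ N) (hmM : m ≤ M) :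
    |gCoef N M x y t t c (fun _ _ => 0) n m|
      ≤ 2 * (1 + γ) * T / |(x 0 - x N) * (y 0 - y M)| := by
  have hcol := hT (n - 1) (by omega) (m - 1) (by omega) (n - 1) (by omega) m hmM
  have hrow := hT n hnN m hmM n hnN (m - 1) (by omega)
  have hceva : |-(c n m * eva N M t)| ≤ γ * (2 * T) := by
    rw [abs_neg, abs_mul]
    exact mul_le_mul hγ (abs_eva_le hT) (abs_nonneg _) ((abs_nonneg _).trans hγ)
  rw [gCoef, abs_div]
  gcongr
  calc _ = |(t (n-1) (m-1) - t (n-1) m) + (t n m - t n (m-1)) + -(c n m * eva N M t)| := by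
          ring_nf
    _ ≤ T + T + γ * (2 * T) := (abs_add_three _ _ _).trans (by linarith)
    _ = 2 * (1 + γ) * T := by ring

theorem abs_eCoef_le (hT : ∀ i ≤ N, ∀ j ≤ M, ∀ k ≤ N, ∀ l ≤ M, |t i j - t k l| ≤ T)
    (hγ : |c n m| ≤ γ) (hnN : n ≤ N) (hmM : m ≤ M) (hy0 : y 0 = 0) :
    |eCoef N M x y t t c (fun _ _ => 0) n m| ≤ (1 + γ) * T / |x 0 - x N| := by
  have hrow := hT (n - 1) (by omega) (m - 1) (by omega) n hnN (m - 1) (by omega)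
  have hc : |c n m * (t 0 0 - t N 0)| ≤ γ * T := by
    rw [abs_mul]
    exact mul_le_mul hγ (hT 0 N.zero_le 0 M.zero_le N le_rfl 0 M.zero_le) (abs_nonneg _)
      ((abs_nonneg _).trans hγ)
  rw [eCoef, abs_div, hy0]
  gcongr
  calc _ = |(t (n-1) (m-1) - t n (m-1)) - c n m * (t 0 0 - t N 0)| := by ring_nf
    _ ≤ T + γ * T := (abs_sub _ _).trans (add_le_add hrow hc)
    _ = (1 + γ) * T := by ring

theorem abs_fCoef_le (hT : ∀ i ≤ N, ∀ j ≤ M, ∀ k ≤ N, ∀ l ≤ M, |t i j - t k l| ≤ T)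
    (hγ : |c n m| ≤ γ) (hnN : n ≤ N) (hmM : m ≤ M) (hx0 : x 0 = 0) :
    |fCoef N M x y t t c (fun _ _ => 0) n m| ≤ (1 + γ) * T / |y 0 - y M| := by
  have hcol := hT (n - 1) (by omega) (m - 1) (by omega) (n - 1) (by omega) m hmM
  have hc : |c n m * (t 0 0 - t 0 M)| ≤ γ * T := by
    rw [abs_mul]
    exact mul_le_mul hγ (hT 0 N.zero_le 0 M.zero_le 0 N.zero_le M le_rfl) (abs_nonneg _)
      ((abs_nonneg _).trans hγ)
  rw [fCoef, abs_div, hx0]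
  gcongr
  calc _ = |(t (n-1) (m-1) - t (n-1) m) - c n m * (t 0 0 - t 0 M)| := by ring_nf
    _ ≤ T + γ * T := (abs_sub _ _).trans (add_le_add hcol hc)
    _ = (1 + γ) * T := by ring

end CoefficientBounds

theorem abs_bilinear_sub_le {e f g k X Y X' Y' h L : ℝ} (hY : |Y| ≤ h) (hX' : |X'| ≤ h)
    (he : |e| + h * |g| ≤ L) (hf : |f| + h * |g| ≤ L) :
    |(e * X + f * Y + g * X * Y + k) - (e * X' + f * Y' + g * X' * Y' + k)|
      ≤ L * (|X - X'| + |Y - Y'|) := by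
  have hgY : |e + g * Y| ≤ L := by
    calc |e + g * Y| ≤ |e| + |g| * |Y| := (abs_add_le _ _).trans_eq (by rw [abs_mul])
      _ ≤ |e| + h * |g| := by rw [mul_comm h]; gcongr
      _ ≤ L := he
  have hgX' : |f + g * X'| ≤ L := by
    calc |f + g * X'| ≤ |f| + |g| * |X'| := (abs_add_le _ _).trans_eq (by rw [abs_mul])
      _ ≤ |f| + h * |g| := by rw [mul_comm h]; gcongr
      _ ≤ L := hf
  calc _ = |(e + g * Y) * (X - X') + (f + g * X') * (Y - Y')| := by ring_nf
    _ ≤ |e + g * Y| * |X - X'| + |f + g * X'| * |Y - Y'| := by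
        rw [← abs_mul, ← abs_mul]; exact abs_add_le _ _
    _ ≤ L * |X - X'| + L * |Y - Y'| := by gcongr
    _ = L * (|X - X'| + |Y - Y'|) := by ring

theorem qMap_lipschitz_general (N : ℕ) (x y : ℕ → ℝ) (t : ℕ → ℕ → ℝ) (c : ℕ → ℕ → ℝ)
    (hx0 : x 0 = 0) (hy0 : y 0 = 0) (hxN : x N = 1/2) (hyN : y N = 1/2) :
    ∀ n m, 1 ≤ n → n ≤ N → 1 ≤ m → m ≤ N →
      ∀ X ∈ Icc (0:ℝ) (1/2), ∀ Y ∈ Icc (0:ℝ) (1/2),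
        ∀ X' ∈ Icc (0:ℝ) (1/2), ∀ Y' ∈ Icc (0:ℝ) (1/2),
          |qMap N N x y t c n m X Y - qMap N N x y t c n m X' Y'| ≤
            8 * (1 + supParam N N c) * supPairDiff N t * (|X - X'| + |Y - Y'|) := by
  intro n m hn hnN hm hmN X hX Y hY X' hX' Y' hY'
  set γ := supParam N N c
  set T := supPairDiff N t
  have hT := abs_sub_le_supPairDiff N t
  have hγ : |c n m| ≤ γ := abs_le_supParam c hn hnN hm hmN
  have hT0 : 0 ≤ T := (abs_nonneg _).trans (hT 0 N.zero_le 0 N.zero_le 0 N.zero_le 0 N.zero_le)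
  have hK : 0 ≤ (1 + γ) * T := mul_nonneg (by linarith [abs_nonneg (c n m)]) hT0
  have hg := abs_gCoef_le (x := x) (y := y) hT hγ hnN hmN
  have he := abs_eCoef_le (x := x) hT hγ hnN hmN hy0
  have hf := abs_fCoef_le (y := y) hT hγ hnN hmN hx0
  simp only [hx0, hy0, hxN, hyN] at hg he hf
  norm_num at hg he hf
  unfold qMap pMap
  refine abs_bilinear_sub_le (h := 1/2) ((abs_of_nonneg hY.1).trans_le hY.2)
    ((abs_of_nonneg hX'.1).trans_le hX'.2) ?_ ?_ <;> linarith

/-- the Lipschitz bound for `q_{n,m}` on `[0,1/2] × [0,1/2]`. -/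
theorem qMap_lipschitz (N : ℕ) (x y : ℕ → ℝ) (z t : ℕ → ℕ → ℝ) (a b c : ℕ → ℕ → ℝ)
    (hD : DataOK N N x y a b c)
    (hx0 : x 0 = 0) (hy0 : y 0 = 0) (hxN : x N = 1/2) (hyN : y N = 1/2) :
    ∀ n m, 1 ≤ n → n ≤ N → 1 ≤ m → m ≤ N →
      ∀ X ∈ Icc (0:ℝ) (1/2), ∀ Y ∈ Icc (0:ℝ) (1/2),
        ∀ X' ∈ Icc (0:ℝ) (1/2), ∀ Y' ∈ Icc (0:ℝ) (1/2),
          |qMap N N x y t c n m X Y - qMap N N x y t c n m X' Y'| ≤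
            8 * (1 + supParam N N c) * supPairDiff N t * (|X - X'| + |Y - Y'|) :=
  qMap_lipschitz_general N x y t c hx0 hy0 hxN hyN

end
end

section
/- For generalized interpolation data, the coefficients e_{n,m}, f_{n,m}, g_{n,m}, k_{n,m} defined by the explicit formulas make the first component of the map F_{n,m} satisfy the four corner join-up conditions: for every 1 ≤ n ≤ N and 1 ≤ m ≤ M, p_{n,m}(x₀,y₀) + α_{n,m} z_{0,0} + β_{n,m} t_{0,0} = z_{n-1,m-1}; p_{n,m}(x_N,y₀) + α_{n,m} z_{N,0} + β_{n,m} t_{N,0} = z_{n,m-1}; p_{n,m}(x₀,y_M) + α_{n,m} z_{0,M} + β_{n,m} t_{0,M} = z_{n-1,m}; and p_{n,m}(x_N,y_M) + α_{n,m} z_{N,M} + β_{n,m} t_{N,M} = z_{n,m}. -/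
open Real Set

noncomputable section

lemma mono_aux (N : ℕ) (x : ℕ → ℝ) (h : ∀ i < N, x i < x (i+1)) (hN : 1 ≤ N) :
    x 0 < x N := by
  have key : ∀ k, 1 ≤ k → k ≤ N → x 0 < x k := by
    intro k
    induction k with
    | zero => omega
    | succ i ih =>
      intro _ hle
      rcases Nat.eq_zero_or_pos i with h0 | h1
      · subst h0; exact h 0 (by omega)
      · exact lt_trans (ih h1 (by omega)) (h i (by omega))
  exact key N hN le_rfl

/-- the coefficients `e, f, g, k` make the first component of `F_{n,m}`
satisfy the four corner join-up conditions. -/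
theorem pMap_joinup (N M : ℕ) (x y : ℕ → ℝ) (z t : ℕ → ℕ → ℝ) (a b c : ℕ → ℕ → ℝ)
    (hD : DataOK N M x y a b c) :
    ∀ n m, 1 ≤ n → n ≤ N → 1 ≤ m → m ≤ M →
      pMap N M x y z t a b n m (x 0) (y 0) + a n m * z 0 0 + b n m * t 0 0
          = z (n-1) (m-1) ∧
      pMap N M x y z t a b n m (x N) (y 0) + a n m * z N 0 + b n m * t N 0
          = z n (m-1) ∧
      pMap N M x y z t a b n m (x 0) (y M) + a n m * z 0 M + b n m * t 0 M
          = z (n-1) m ∧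
      pMap N M x y z t a b n m (x N) (y M) + a n m * z N M + b n m * t N M
          = z n m := by
  intro n m h1n hnN h1m hmM
  have hx : x 0 < x N := mono_aux N x hD.hx hD.hN
  have hy : y 0 < y M := mono_aux M y hD.hy hD.hM
  have hx' : x 0 - x N ≠ 0 := by linarith
  have hy' : y 0 - y M ≠ 0 := by linarith
  have hxy : (x 0 - x N) * (y 0 - y M) ≠ 0 := mul_ne_zero hx' hy'
  set g := gCoef N M x y z t a b n m with hg
  set e := eCoef N M x y z t a b n m with he
  set f := fCoef N M x y z t a b n m with hf
  have hgE : g * ((x 0 - x N) * (y 0 - y M))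
      = z (n-1) (m-1) - z (n-1) m - z n (m-1) + z n m
        - a n m * eva N M z - b n m * eva N M t := by
    rw [hg, gCoef, div_mul_cancel₀ _ hxy]
  have heE : e * (x 0 - x N)
      = z (n-1) (m-1) - z n (m-1) - a n m * (z 0 0 - z N 0) - b n m * (t 0 0 - t N 0)
        - g * (x 0 - x N) * y 0 := by
    rw [he, eCoef, ← hg, div_mul_cancel₀ _ hx']
  have hfE : f * (y 0 - y M)
      = z (n-1) (m-1) - z (n-1) m - a n m * (z 0 0 - z 0 M) - b n m * (t 0 0 - t 0 M)
        - g * (y 0 - y M) * x 0 := by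
    rw [hf, fCoef, ← hg, div_mul_cancel₀ _ hy']
  simp only [eva] at hgE
  simp only [pMap, kCoef, ← he, ← hf, ← hg]
  refine ⟨?_, ?_, ?_, ?_⟩
  · linear_combination heE + hfE - hgE
  · linear_combination hfE - hgE
  · linear_combination heE - hgE
  · ring

end
end

section
/- Consider generalized interpolation data Δ = {(x_i, y_j, z_{i,j}, t_{i,j})} and Δ* = {(x_i, y_j, z*_{i,j}, t_{i,j})} with N = M, x₀ = y₀ = 0, x_N = y_N = 1/2, the same t-values, and the same parameters α_{n,m}, β_{n,m}, γ_{n,m}. Let (F₁, F₂) and (G₁, G₂) be the corresponding CHFIS pairs. Then F₂ = G₂, and for every 1 ≤ n, m ≤ N and every (x,y) ∈ [0,1/2] × [0,1/2]: |F₁(φ_n(x),ψ_m(y)) − G₁(φ_n(x),ψ_m(y))| ≤ α · |F₁(x,y) − G₁(x,y)| + (1+α) · (2|x − 1/2| + 2|y − 1/2| + 4|xy − 1/4| + 1) · max{ |z_{n,m} − z*_{n,m}| : 0 ≤ n, m ≤ N }, where α = max_{n,m}|α_{n,m}|. -/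
open Real Set

noncomputable section

private lemma xmono {N : ℕ} {x : ℕ → ℝ} (hx : ∀ i < N, x i < x (i+1)) :
    ∀ i j, i ≤ j → j ≤ N → x i ≤ x j := by
  intro i j hij hjN
  induction j with
  | zero => simp [Nat.le_zero.mp hij]
  | succ j ih =>
    rcases Nat.eq_or_lt_of_le hij with h | h
    · rw [h]
    · exact le_trans (ih (Nat.lt_succ_iff.mp h) (le_trans (Nat.le_succ j) hjN))
        (le_of_lt (hx j (Nat.lt_of_succ_le hjN)))

private lemma find_cell {N : ℕ} {x : ℕ → ℝ} (hN : 1 ≤ N) (hx : ∀ i < N, x i < x (i+1))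
    {X : ℝ} (hX : X ∈ Icc (x 0) (x N)) :
    ∃ n, 1 ≤ n ∧ n ≤ N ∧ x (n-1) ≤ X ∧ X ≤ x n := by
  classical
  set n0 := Nat.findGreatest (fun i => x i ≤ X) N with hn0
  have hspec : x n0 ≤ X := by
    have := Nat.findGreatest_spec (P := fun i => x i ≤ X) (Nat.zero_le N) hX.1
    simpa [hn0] using this
  have hle : n0 ≤ N := Nat.findGreatest_le N
  rcases eq_or_lt_of_le hle with h | h
  · refine ⟨N, hN, le_refl _, ?_, hX.2⟩
    have h1 : x (N-1) ≤ x N := xmono hx (N-1) N (Nat.sub_le N 1) (le_refl N)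
    have h2 : x N ≤ X := by rw [← h]; exact hspec
    linarith
  · refine ⟨n0+1, Nat.succ_le_succ (Nat.zero_le _), h, ?_, ?_⟩
    · simpa using hspec
    · by_contra hc
      push_neg at hc
      have : n0 + 1 ≤ n0 := Nat.le_findGreatest h (le_of_lt hc)
      omega

private lemma phi_surj_s17 {N : ℕ} {x : ℕ → ℝ} (hx : ∀ i < N, x i < x (i+1)) {n : ℕ}
    (hn1 : 1 ≤ n) (hnN : n ≤ N) {X : ℝ} (h1 : x (n-1) ≤ X) (h2 : X ≤ x n) :
    ∃ X' ∈ Icc (x 0) (x N), phiMap N x n X' = X := by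
  have hd : x (n-1) < x n := by
    have := hx (n-1) (by omega)
    rwa [Nat.sub_add_cancel hn1] at this
  have hD : x 0 < x N := by
    have h01 : x 0 < x 1 := hx 0 (by omega)
    exact h01.trans_le (xmono hx 1 N (le_trans hn1 hnN) (le_refl N))
  refine ⟨x 0 + (X - x (n-1)) * (x N - x 0) / (x n - x (n-1)), ⟨?_, ?_⟩, ?_⟩
  · have : 0 ≤ (X - x (n-1)) * (x N - x 0) / (x n - x (n-1)) :=
      div_nonneg (mul_nonneg (by linarith) (by linarith)) (by linarith)
    linarith
  · rw [← sub_nonneg]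
    have hkey : (X - x (n-1)) * (x N - x 0) / (x n - x (n-1)) ≤ x N - x 0 := by
      rw [div_le_iff₀ (by linarith)]
      nlinarith
    linarith
  · have hdne : x n - x (n-1) ≠ 0 := by linarith
    have hDne : x N - x 0 ≠ 0 := by linarith
    unfold phiMap
    field_simp
    ring

set_option maxHeartbeats 1600000 in
/-- for a perturbation of the dependent variable `z` only (on
`[0,1/2] × [0,1/2]`), `F₂ = G₂` and the pointwise recursion estimate for `F₁ - G₁` holds. -/
theorem chfis_pointwise_dep (N : ℕ) (x y : ℕ → ℝ) (z zs t : ℕ → ℕ → ℝ)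
    (a b c : ℕ → ℕ → ℝ)
    (hD : DataOK N N x y a b c)
    (hx0 : x 0 = 0) (hy0 : y 0 = 0) (hxN : x N = 1/2) (hyN : y N = 1/2)
    (F₁ F₂ G₁ G₂ : ℝ → ℝ → ℝ)
    (hF : IsCHFIS N N x y z t a b c F₁ F₂)
    (hG : IsCHFIS N N x y zs t a b c G₁ G₂) :
    (∀ X ∈ Icc (0:ℝ) (1/2), ∀ Y ∈ Icc (0:ℝ) (1/2), F₂ X Y = G₂ X Y) ∧
    ∀ n m, 1 ≤ n → n ≤ N → 1 ≤ m → m ≤ N →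
      ∀ X ∈ Icc (0:ℝ) (1/2), ∀ Y ∈ Icc (0:ℝ) (1/2),
        |F₁ (phiMap N x n X) (phiMap N y m Y) - G₁ (phiMap N x n X) (phiMap N y m Y)| ≤
          supParam N N a * |F₁ X Y - G₁ X Y|
          + (1 + supParam N N a)
            * (2 * |X - 1/2| + 2 * |Y - 1/2| + 4 * |X * Y - 1/4| + 1)
            * supValDiff N N z zs := by
  obtain ⟨hN, _, hx, hy, ha, hbc⟩ := hD
  obtain ⟨hF1c, hF2c, hFint, hFrec⟩ := hF
  obtain ⟨hG1c, hG2c, hGint, hGrec⟩ := hG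
  have hIx : Icc (x 0) (x N) = Icc (0:ℝ) (1/2) := by rw [hx0, hxN]
  have hIy : Icc (y 0) (y N) = Icc (0:ℝ) (1/2) := by rw [hy0, hyN]
  -- Part 1 : F₂ = G₂ on the square
  have hK : IsCompact (Icc (x 0) (x N) ×ˢ Icc (y 0) (y N)) :=
    isCompact_Icc.prod isCompact_Icc
  have hKne : (Icc (x 0) (x N) ×ˢ Icc (y 0) (y N)).Nonempty :=
    ⟨(x 0, y 0), ⟨⟨le_refl _, by rw [hx0, hxN]; norm_num⟩,
      ⟨le_refl _, by rw [hy0, hyN]; norm_num⟩⟩⟩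
  have hDc : ContinuousOn (fun P : ℝ × ℝ => |F₂ P.1 P.2 - G₂ P.1 P.2|)
      (Icc (x 0) (x N) ×ˢ Icc (y 0) (y N)) := (hF2c.sub hG2c).abs
  obtain ⟨P, hPK, hPmax⟩ := hK.exists_isMaxOn hKne hDc
  have hmainD : ∀ Q ∈ Icc (x 0) (x N) ×ˢ Icc (y 0) (y N),
      |F₂ Q.1 Q.2 - G₂ Q.1 Q.2| ≤ 0 := by
    intro Q hQ
    have hPb := isMaxOn_iff.mp hPmax Q hQ
    obtain ⟨hP1, hP2⟩ := hPK
    obtain ⟨n, hn1, hnN, hxn1, hxn2⟩ := find_cell hN hx hP1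
    obtain ⟨m, hm1, hmN, hym1, hym2⟩ := find_cell hN hy hP2
    obtain ⟨X', hX', hphiX⟩ := phi_surj_s17 hx hn1 hnN hxn1 hxn2
    obtain ⟨Y', hY', hphiY⟩ := phi_surj_s17 hy hm1 hmN hym1 hym2
    have hFe := (hFrec n m hn1 hnN hm1 hmN X' hX' Y' hY').2
    have hGe := (hGrec n m hn1 hnN hm1 hmN X' hX' Y' hY').2
    have hc : |c n m| < 1 := by
      have := hbc n m hn1 hnN hm1 hmN
      have := abs_nonneg (b n m)
      linarith
    have hrec : F₂ P.1 P.2 - G₂ P.1 P.2 = c n m * (F₂ X' Y' - G₂ X' Y') := by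
      rw [← hphiX, ← hphiY, hFe, hGe]; ring
    have hXY'K : (X', Y') ∈ Icc (x 0) (x N) ×ˢ Icc (y 0) (y N) := ⟨hX', hY'⟩
    have hb2 := isMaxOn_iff.mp hPmax (X', Y') hXY'K
    have h1 : |F₂ P.1 P.2 - G₂ P.1 P.2| ≤ |c n m| * |F₂ P.1 P.2 - G₂ P.1 P.2| :=
      calc |F₂ P.1 P.2 - G₂ P.1 P.2|
          = |c n m| * |F₂ X' Y' - G₂ X' Y'| := by rw [hrec, abs_mul]
        _ ≤ |c n m| * |F₂ P.1 P.2 - G₂ P.1 P.2| :=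
            mul_le_mul_of_nonneg_left hb2 (abs_nonneg _)
    have h0 : 0 ≤ |F₂ P.1 P.2 - G₂ P.1 P.2| := abs_nonneg _
    nlinarith [hPb]
  have hF2G2 : ∀ X ∈ Icc (0:ℝ) (1/2), ∀ Y ∈ Icc (0:ℝ) (1/2), F₂ X Y = G₂ X Y := by
    intro X hX Y hY
    have := hmainD (X, Y) ⟨by rw [hIx]; exact hX, by rw [hIy]; exact hY⟩
    have := abs_nonpos_iff.mp this
    linarith [sub_eq_zero.mp this, this]
  refine ⟨hF2G2, ?_⟩
  -- Part 2 : the pointwise estimate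
  intro n m hn1 hnN hm1 hmN X hX Y hY
  have hXx : X ∈ Icc (x 0) (x N) := by rw [hIx]; exact hX
  have hYy : Y ∈ Icc (y 0) (y N) := by rw [hIy]; exact hY
  have hFe := (hFrec n m hn1 hnN hm1 hmN X hXx Y hYy).1
  have hGe := (hGrec n m hn1 hnN hm1 hmN X hXx Y hYy).1
  have hF2eq : F₂ X Y = G₂ X Y := hF2G2 X hX Y hY
  set α := supParam N N a with hαdef
  have hbddA : BddAbove {v : ℝ | ∃ n m, 1 ≤ n ∧ n ≤ N ∧ 1 ≤ m ∧ m ≤ N ∧ v = |a n m|} := by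
    refine ⟨1, ?_⟩
    rintro v ⟨i, j, hi1, hiN, hj1, hjN, rfl⟩
    exact le_of_lt (ha i j hi1 hiN hj1 hjN)
  have hαa : |a n m| ≤ α := le_csSup hbddA ⟨n, m, hn1, hnN, hm1, hmN, rfl⟩
  have hα0 : (0:ℝ) ≤ α := le_trans (abs_nonneg _) hαa
  set S := supValDiff N N z zs with hSdef
  have hfinS : ({v : ℝ | ∃ n m, n ≤ N ∧ m ≤ N ∧ v = |z n m - zs n m|}).Finite := by
    apply Set.Finite.subset (Set.Finite.image (fun p : ℕ × ℕ => |z p.1 p.2 - zs p.1 p.2|)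
      ((Set.finite_Iic N).prod (Set.finite_Iic N)))
    rintro v ⟨i, j, hi, hj, rfl⟩
    exact ⟨(i, j), ⟨hi, hj⟩, rfl⟩
  have hSmem : ∀ i j, i ≤ N → j ≤ N → |z i j - zs i j| ≤ S := fun i j hi hj =>
    le_csSup hfinS.bddAbove ⟨i, j, hi, hj, rfl⟩
  have hS0 : (0:ℝ) ≤ S := le_trans (abs_nonneg _) (hSmem 0 0 (Nat.zero_le _) (Nat.zero_le _))
  -- Key algebraic identity for the difference of the p maps
  have key : pMap N N x y z t a b n m X Y - pMap N N x y zs t a b n m X Y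
      = (1-2*X)*(1-2*Y)*((z (n-1) (m-1) - zs (n-1) (m-1)) - a n m * (z 0 0 - zs 0 0))
      + 2*X*(1-2*Y)*((z n (m-1) - zs n (m-1)) - a n m * (z N 0 - zs N 0))
      + 2*Y*(1-2*X)*((z (n-1) m - zs (n-1) m) - a n m * (z 0 N - zs 0 N))
      + 4*(X*Y)*((z n m - zs n m) - a n m * (z N N - zs N N)) := by
    simp only [pMap, eCoef, fCoef, gCoef, kCoef, eva, hx0, hy0, hxN, hyN]
    ring
  -- bounds on each bracket
  have hbr : ∀ i j k l : ℕ, i ≤ N → j ≤ N → k ≤ N → l ≤ N →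
      |(z i j - zs i j) - a n m * (z k l - zs k l)| ≤ (1+α)*S := by
    intro i j k l hi hj hk hl
    calc |(z i j - zs i j) - a n m * (z k l - zs k l)|
        ≤ |z i j - zs i j| + |a n m * (z k l - zs k l)| := abs_sub _ _
      _ ≤ S + α * S := by
          rw [abs_mul]
          exact add_le_add (hSmem i j hi hj)
            (mul_le_mul hαa (hSmem k l hk hl) (abs_nonneg _) hα0)
      _ = (1+α)*S := by ring
  have hT1 := hbr (n-1) (m-1) 0 0 (by omega) (by omega) (Nat.zero_le _) (Nat.zero_le _)
  have hT2 := hbr n (m-1) N 0 hnN (by omega) (le_refl _) (Nat.zero_le _)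
  have hT3 := hbr (n-1) m 0 N (by omega) hmN (Nat.zero_le _) (le_refl _)
  have hT4 := hbr n m N N hnN hmN (le_refl _) (le_refl _)
  rw [abs_le] at hT1 hT2 hT3 hT4
  have hc1 : (0:ℝ) ≤ (1-2*X)*(1-2*Y) :=
    mul_nonneg (by linarith [hX.2]) (by linarith [hY.2])
  have hc2 : (0:ℝ) ≤ 2*X*(1-2*Y) :=
    mul_nonneg (by linarith [hX.1]) (by linarith [hY.2])
  have hc3 : (0:ℝ) ≤ 2*Y*(1-2*X) :=
    mul_nonneg (by linarith [hY.1]) (by linarith [hX.2])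
  have hc4 : (0:ℝ) ≤ 4*(X*Y) := by
    have := mul_nonneg hX.1 hY.1; linarith
  have hpd : |pMap N N x y z t a b n m X Y - pMap N N x y zs t a b n m X Y| ≤ (1+α)*S := by
    rw [key, abs_le]
    constructor
    · linarith [mul_le_mul_of_nonneg_left hT1.1 hc1, mul_le_mul_of_nonneg_left hT2.1 hc2,
        mul_le_mul_of_nonneg_left hT3.1 hc3, mul_le_mul_of_nonneg_left hT4.1 hc4]
    · linarith [mul_le_mul_of_nonneg_left hT1.2 hc1, mul_le_mul_of_nonneg_left hT2.2 hc2,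
        mul_le_mul_of_nonneg_left hT3.2 hc3, mul_le_mul_of_nonneg_left hT4.2 hc4]
  have hrecdiff : F₁ (phiMap N x n X) (phiMap N y m Y) - G₁ (phiMap N x n X) (phiMap N y m Y)
      = a n m * (F₁ X Y - G₁ X Y)
        + (pMap N N x y z t a b n m X Y - pMap N N x y zs t a b n m X Y) := by
    rw [hFe, hGe, hF2eq]; ring
  have hfac : (1:ℝ) ≤ 2 * |X - 1/2| + 2 * |Y - 1/2| + 4 * |X * Y - 1/4| + 1 := by
    have := abs_nonneg (X - 1/2)
    have := abs_nonneg (Y - 1/2)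
    have := abs_nonneg (X * Y - 1/4)
    linarith
  calc |F₁ (phiMap N x n X) (phiMap N y m Y) - G₁ (phiMap N x n X) (phiMap N y m Y)|
      = |a n m * (F₁ X Y - G₁ X Y)
        + (pMap N N x y z t a b n m X Y - pMap N N x y zs t a b n m X Y)| := by
        rw [hrecdiff]
    _ ≤ |a n m * (F₁ X Y - G₁ X Y)|
        + |pMap N N x y z t a b n m X Y - pMap N N x y zs t a b n m X Y| := abs_add_le _ _
    _ ≤ α * |F₁ X Y - G₁ X Y| + (1+α) * S := by
        rw [abs_mul]
        exact add_le_add (mul_le_mul_of_nonneg_right hαa (abs_nonneg _)) hpd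
    _ ≤ α * |F₁ X Y - G₁ X Y|
        + (1 + α) * (2 * |X - 1/2| + 2 * |Y - 1/2| + 4 * |X * Y - 1/4| + 1) * S := by
        have h1 : (1+α) * 1 * S ≤
            (1 + α) * (2 * |X - 1/2| + 2 * |Y - 1/2| + 4 * |X * Y - 1/4| + 1) * S :=
          mul_le_mul_of_nonneg_right
            (mul_le_mul_of_nonneg_left hfac (by linarith)) hS0
        linarith

end
end

section
/- Consider generalized interpolation data Δ = {(x_i, y_j, z_{i,j}, t_{i,j})} and Δ* = {(x_i, y_j, z_{i,j}, t*_{i,j})} with N = M, x₀ = y₀ = 0, x_N = y_N = 1/2, the same z-values, and the same parameters α_{n,m}, β_{n,m}, γ_{n,m}. Let (F₁, F₂) and (G₁, G₂) be the corresponding CHFIS pairs. Then for every 1 ≤ n, m ≤ N and every (x,y) ∈ [0,1/2] × [0,1/2]: |F₂(φ_n(x),ψ_m(y)) − G₂(φ_n(x),ψ_m(y))| ≤ γ · |F₂(x,y) − G₂(x,y)| + (1+γ) · (2|x − 1/2| + 2|y − 1/2| + 4|xy − 1/4| + 1) · max{ |t_{n,m} − t*_{n,m}| : 0 ≤ n,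 m ≤ N }, where γ = max_{n,m}|γ_{n,m}|. -/
open Real Set

noncomputable section

/-- for a perturbation of the hidden variable `t` only (on
`[0,1/2] × [0,1/2]`), the pointwise recursion estimate for `F₂ - G₂` holds. -/
theorem chfis_pointwise_hidden_F2 (N : ℕ) (x y : ℕ → ℝ) (z t ts : ℕ → ℕ → ℝ)
    (a b c : ℕ → ℕ → ℝ)
    (hD : DataOK N N x y a b c)
    (hx0 : x 0 = 0) (hy0 : y 0 = 0) (hxN : x N = 1/2) (hyN : y N = 1/2)
    (F₁ F₂ G₁ G₂ : ℝ → ℝ → ℝ)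
    (hF : IsCHFIS N N x y z t a b c F₁ F₂)
    (hG : IsCHFIS N N x y z ts a b c G₁ G₂) :
    ∀ n m, 1 ≤ n → n ≤ N → 1 ≤ m → m ≤ N →
      ∀ X ∈ Icc (0:ℝ) (1/2), ∀ Y ∈ Icc (0:ℝ) (1/2),
        |F₂ (phiMap N x n X) (phiMap N y m Y) - G₂ (phiMap N x n X) (phiMap N y m Y)| ≤
          supParam N N c * |F₂ X Y - G₂ X Y|
          + (1 + supParam N N c)
            * (2 * |X - 1/2| + 2 * |Y - 1/2| + 4 * |X * Y - 1/4| + 1)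
            * supValDiff N N t ts := by
  intro n m hn1 hnN hm1 hmN X hX Y hY
  have hXmem : X ∈ Icc (x 0) (x N) := by rw [hx0, hxN]; exact hX
  have hYmem : Y ∈ Icc (y 0) (y N) := by rw [hy0, hyN]; exact hY
  have hF2 := (hF.2.2.2 n m hn1 hnN hm1 hmN X hXmem Y hYmem).2
  have hG2 := (hG.2.2.2 n m hn1 hnN hm1 hmN X hXmem Y hYmem).2
  set γ := supParam N N c with hγdef
  set D := supValDiff N N t ts with hDdef
  -- bound |c n m| ≤ γ
  have hcbdd : BddAbove {v : ℝ | ∃ n m, 1 ≤ n ∧ n ≤ N ∧ 1 ≤ m ∧ m ≤ N ∧ v = |c n m|} := by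
    apply Set.Finite.bddAbove
    apply Set.Finite.subset (((Set.finite_Icc ((1:ℕ),(1:ℕ)) (N,N)).image
      (fun p : ℕ × ℕ => |c p.1 p.2|)))
    rintro v ⟨i, j, h1, h2, h3, h4, rfl⟩
    exact ⟨(i, j), ⟨⟨h1, h3⟩, ⟨h2, h4⟩⟩, rfl⟩
  have hγ : |c n m| ≤ γ := le_csSup hcbdd ⟨n, m, hn1, hnN, hm1, hmN, rfl⟩
  have hγ0 : 0 ≤ γ := (abs_nonneg _).trans hγ
  -- bound |t i j - ts i j| ≤ D
  have hDbdd : BddAbove {v : ℝ | ∃ n m, n ≤ N ∧ m ≤ N ∧ v = |t n m - ts n m|} := by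
    apply Set.Finite.bddAbove
    apply Set.Finite.subset (((Set.finite_Icc ((0:ℕ),(0:ℕ)) (N,N)).image
      (fun p : ℕ × ℕ => |t p.1 p.2 - ts p.1 p.2|)))
    rintro v ⟨i, j, h1, h2, rfl⟩
    exact ⟨(i, j), ⟨⟨Nat.zero_le _, Nat.zero_le _⟩, ⟨h1, h2⟩⟩, rfl⟩
  have hD : ∀ i ≤ N, ∀ j ≤ N, |t i j - ts i j| ≤ D := fun i hi j hj =>
    le_csSup hDbdd ⟨i, j, hi, hj, rfl⟩
  have hD0 : 0 ≤ D := (abs_nonneg _).trans (hD 0 (Nat.zero_le _) 0 (Nat.zero_le _))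
  -- the bilinear corner identity for the q-difference
  have hq : qMap N N x y t c n m X Y - qMap N N x y ts c n m X Y =
      ((t (n-1) (m-1) - ts (n-1) (m-1)) - c n m * (t 0 0 - ts 0 0)) * ((1-2*X)*(1-2*Y))
      + ((t n (m-1) - ts n (m-1)) - c n m * (t N 0 - ts N 0)) * (2*X*(1-2*Y))
      + ((t (n-1) m - ts (n-1) m) - c n m * (t 0 N - ts 0 N)) * ((1-2*X)*(2*Y))
      + ((t n m - ts n m) - c n m * (t N N - ts N N)) * (4*X*Y) := by
    simp only [qMap, pMap, eCoef, fCoef, gCoef, kCoef, eva, hx0, hy0, hxN, hyN]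
    ring
  obtain ⟨hX0, hX1⟩ := hX
  obtain ⟨hY0, hY1⟩ := hY
  have w1 : (0:ℝ) ≤ (1-2*X)*(1-2*Y) := mul_nonneg (by linarith) (by linarith)
  have w2 : (0:ℝ) ≤ 2*X*(1-2*Y) := mul_nonneg (by linarith) (by linarith)
  have w3 : (0:ℝ) ≤ (1-2*X)*(2*Y) := mul_nonneg (by linarith) (by linarith)
  have w4 : (0:ℝ) ≤ 4*X*Y := by positivity
  -- corner bounds
  have corner : ∀ i ≤ N, ∀ j ≤ N, ∀ k ≤ N, ∀ l ≤ N,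
      |(t i j - ts i j) - c n m * (t k l - ts k l)| ≤ (1+γ)*D := by
    intro i hi j hj k hk l hl
    calc |(t i j - ts i j) - c n m * (t k l - ts k l)|
        ≤ |t i j - ts i j| + |c n m * (t k l - ts k l)| := abs_sub _ _
      _ = |t i j - ts i j| + |c n m| * |t k l - ts k l| := by rw [abs_mul]
      _ ≤ D + γ * D := add_le_add (hD i hi j hj)
          (mul_le_mul hγ (hD k hk l hl) (abs_nonneg _) hγ0)
      _ = (1+γ)*D := by ring
  have hn1' : n - 1 ≤ N := by omega
  have hm1' : m - 1 ≤ N := by omega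
  have hqabs : |qMap N N x y t c n m X Y - qMap N N x y ts c n m X Y| ≤ (1+γ)*D := by
    rw [hq]
    calc |((t (n-1) (m-1) - ts (n-1) (m-1)) - c n m * (t 0 0 - ts 0 0)) * ((1-2*X)*(1-2*Y))
          + ((t n (m-1) - ts n (m-1)) - c n m * (t N 0 - ts N 0)) * (2*X*(1-2*Y))
          + ((t (n-1) m - ts (n-1) m) - c n m * (t 0 N - ts 0 N)) * ((1-2*X)*(2*Y))
          + ((t n m - ts n m) - c n m * (t N N - ts N N)) * (4*X*Y)|
        ≤ |((t (n-1) (m-1) - ts (n-1) (m-1)) - c n m * (t 0 0 - ts 0 0))| * ((1-2*X)*(1-2*Y))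
          + |((t n (m-1) - ts n (m-1)) - c n m * (t N 0 - ts N 0))| * (2*X*(1-2*Y))
          + |((t (n-1) m - ts (n-1) m) - c n m * (t 0 N - ts 0 N))| * ((1-2*X)*(2*Y))
          + |((t n m - ts n m) - c n m * (t N N - ts N N))| * (4*X*Y) := by
          refine le_trans (abs_add_le _ _) (add_le_add (le_trans (abs_add_le _ _)
            (add_le_add (le_trans (abs_add_le _ _) (add_le_add ?_ ?_)) ?_)) ?_) <;>
            rw [abs_mul] <;>
            first
              | rw [abs_of_nonneg w1] | rw [abs_of_nonneg w2]
              | rw [abs_of_nonneg w3] | rw [abs_of_nonneg w4]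
      _ ≤ (1+γ)*D * ((1-2*X)*(1-2*Y)) + (1+γ)*D * (2*X*(1-2*Y))
          + (1+γ)*D * ((1-2*X)*(2*Y)) + (1+γ)*D * (4*X*Y) := by
          gcongr
          · exact corner _ hn1' _ hm1' _ (Nat.zero_le _) _ (Nat.zero_le _)
          · exact corner _ hnN _ hm1' _ le_rfl _ (Nat.zero_le _)
          · exact corner _ hn1' _ hmN _ (Nat.zero_le _) _ le_rfl
          · exact corner _ hnN _ hmN _ le_rfl _ le_rfl
      _ = (1+γ)*D := by ring
  have hmain : F₂ (phiMap N x n X) (phiMap N y m Y) - G₂ (phiMap N x n X) (phiMap N y m Y)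
      = c n m * (F₂ X Y - G₂ X Y)
        + (qMap N N x y t c n m X Y - qMap N N x y ts c n m X Y) := by
    rw [hF2, hG2]; ring
  have hE : (0:ℝ) ≤ 2 * |X - 1/2| + 2 * |Y - 1/2| + 4 * |X * Y - 1/4| := by positivity
  calc |F₂ (phiMap N x n X) (phiMap N y m Y) - G₂ (phiMap N x n X) (phiMap N y m Y)|
      = |c n m * (F₂ X Y - G₂ X Y)
          + (qMap N N x y t c n m X Y - qMap N N x y ts c n m X Y)| := by rw [hmain]
    _ ≤ |c n m| * |F₂ X Y - G₂ X Y|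
          + |qMap N N x y t c n m X Y - qMap N N x y ts c n m X Y| := by
        refine le_trans (abs_add_le _ _) ?_; rw [abs_mul]
    _ ≤ γ * |F₂ X Y - G₂ X Y| + (1+γ)*D :=
        add_le_add (mul_le_mul_of_nonneg_right hγ (abs_nonneg _)) hqabs
    _ ≤ γ * |F₂ X Y - G₂ X Y|
          + (1 + γ) * (2 * |X - 1/2| + 2 * |Y - 1/2| + 4 * |X * Y - 1/4| + 1) * D := by
        nlinarith [mul_nonneg (mul_nonneg (by linarith : (0:ℝ) ≤ 1+γ) hE) hD0]


end
end
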